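/- arXiv:1111.1150 — 6 statements merged into one kernel-verified Lean document; each statement's English description precedes it below -/
import Mathlib

section
/- If a, b, c are integers with gcd(a,b,c)=1, ab ≠ 0, and ka + lb = gcd(a,b) for integers k, l, then the vectors u = (1/gcd(a,b))·(-b,a,0) and τ = k·(-c,0,a) + l·(0,-c,b) generate the lattice {(x,y,z) ∈ ℤ³ : ax+by+cz = 0}. -/
/-!
Write `g = gcd(a, b)`, `a = g a'`, `b = g b'`, so that `k a' + l b' = 1`. If `p` solves
`g (a' x + b' y) + c z = 0`, then `g ∣ c z` and `gcd(g, c) = 1` give `z = g n`. Then `p - n τ` is a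
solution `(x, y, 0)` with `a' x + b' y = 0`, and as `a'`, `b'` are coprime it equals `m u`.
-/

theorem IsCoprime.exists_eq_of_mul_add_mul_eq_zero {R : Type*} [CommRing R] {a b x y : R}
    (h : IsCoprime a b) (hxy : a * x + b * y = 0) : ∃ m, x = -b * m ∧ y = a * m := by
  obtain ⟨s, t, hst⟩ := h
  exact ⟨s * y - t * x, by linear_combination (-x) * hst + s * hxy,
    by linear_combination (-y) * hst + t * hxy⟩

section Kernel

variable {R : Type*} [CommRing R] {g a b c k l : R}

theorem dot_smul_add_smul_eq_zero (hkl : k * a + l * b = 1) (m n : R) :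
    let p : Fin 3 → R := m • ![-b, a, 0] + n • ![-(k * c), -(l * c), g]
    g * a * p 0 + g * b * p 1 + c * p 2 = 0 := by
  simp only [Pi.add_apply, Pi.smul_apply, smul_eq_mul, Matrix.cons_val_zero, Matrix.cons_val_one,
    Matrix.cons_val_two, Matrix.head_cons, Matrix.tail_cons]
  linear_combination (-(n * c * g)) * hkl

theorem exists_eq_smul_add_smul_of_dot_eq_zero [NoZeroDivisors R] (hg : g ≠ 0)
    (hgc : IsCoprime g c) (hkl : k * a + l * b = 1) {p : Fin 3 → R}
    (hp : g * a * p 0 + g * b * p 1 + c * p 2 = 0) :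
    ∃ m n : R, p = m • ![-b, a, 0] + n • ![-(k * c), -(l * c), g] := by
  obtain ⟨n, hn⟩ : g ∣ p 2 :=
    hgc.dvd_of_dvd_mul_left ⟨-(a * p 0 + b * p 1), by linear_combination hp⟩
  have hab : IsCoprime a b := ⟨k, l, hkl⟩
  have hshift : a * (p 0 + n * (k * c)) + b * (p 1 + n * (l * c)) = 0 := by
    refine (mul_eq_zero.mp ?_).resolve_left hg
    linear_combination hp + (c * n * g) * hkl - c * hn
  obtain ⟨m, hm0, hm1⟩ := hab.exists_eq_of_mul_add_mul_eq_zero hshift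
  refine ⟨m, n, funext fun i => ?_⟩
  fin_cases i <;>
    simp only [Pi.add_apply, Pi.smul_apply, smul_eq_mul, Fin.zero_eta, Fin.mk_one,
      Fin.reduceFinMk, Matrix.cons_val_zero, Matrix.cons_val_one, Matrix.cons_val_two,
      Matrix.head_cons, Matrix.tail_cons]
  · linear_combination hm0
  · linear_combination hm1
  · linear_combination hn

theorem dot_eq_zero_iff_exists_eq_smul_add_smul [NoZeroDivisors R] (hg : g ≠ 0)
    (hgc : IsCoprime g c) (hkl : k * a + l * b = 1) (p : Fin 3 → R) :
    g * a * p 0 + g * b * p 1 + c * p 2 = 0 ↔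
      ∃ m n : R, p = m • ![-b, a, 0] + n • ![-(k * c), -(l * c), g] := by
  refine ⟨exists_eq_smul_add_smul_of_dot_eq_zero hg hgc hkl, ?_⟩
  rintro ⟨m, n, rfl⟩
  exact dot_smul_add_smul_eq_zero hkl m n

end Kernel

theorem explicit_generators_of_sublattice (a b c k l : ℤ)
    (hgcd : Int.gcd a (Int.gcd b c) = 1) (hab : a * b ≠ 0)
    (hkl : k * a + l * b = Int.gcd a b)
    (u τ : Fin 3 → ℤ)
    (hu : u = ![(-b) / (Int.gcd a b : ℤ), a / (Int.gcd a b : ℤ), 0])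
    (hτ : τ = fun i => k * (![-c, 0, a] i) + l * (![0, -c, b] i)) :
    ∀ p : Fin 3 → ℤ, a * p 0 + b * p 1 + c * p 2 = 0 ↔
      ∃ m n : ℤ, p = m • u + n • τ := by
  set g : ℤ := (Int.gcd a b : ℤ)
  have hg : g ≠ 0 := by
    have := Int.gcd_pos_of_ne_zero_left b (left_ne_zero_of_mul hab)
    omega
  have hgc : IsCoprime g c := by rw [Int.isCoprime_iff_gcd_eq_one, Int.gcd_assoc, hgcd]
  obtain ⟨a', ha⟩ : g ∣ a := Int.gcd_dvd_left a b
  obtain ⟨b', hb⟩ : g ∣ b := Int.gcd_dvd_right a b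
  clear_value g
  subst ha hb
  have hkl' : k * a' + l * b' = 1 :=
    mul_left_cancel₀ hg (by linear_combination hkl)
  have hu' : u = ![-b', a', 0] := by
    rw [hu, ← mul_neg, Int.mul_ediv_cancel_left _ hg, Int.mul_ediv_cancel_left _ hg]
  have hτ' : τ = ![-(k * c), -(l * c), g] := by
    rw [hτ]
    ext i
    fin_cases i <;> simp [hkl]
  rw [hu', hτ']
  exact dot_eq_zero_iff_exists_eq_smul_add_smul hg hgc hkl'
end

section
/- Let (a,b,c) be a primitive Pythagorean triple with a²+b²=c², and let C be the cube with vertex set {(x,y,z+m c) : (x,y) a vertex of the square with corners (0,0),(a,b),(a−b,a+b),(−b,a), m ∈ {0,1}} (the square translated along (0,0,c)). Then for every positive integer t, the number of lattice points of ℤ³ in the dilate tC equals (ct+1)(c²t²+2t+1). -/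
/-!
The cube is the image of the unit cube under the linear map with matrix `(a -b 0; b a 0; 0 0 c)`,
so an integer point `p` lies in `t • C` iff `a p₀ + b p₁` and `a p₁ - b p₀` lie in `[0, t c²]` and
`p₂` lies in `[0, t c]`. The count therefore factors as `(c t + 1)` times the number of
`(x, y) ∈ ℤ²` sent into the box `[0, t c²]²` by `(x, y) ↦ (a x + b y, a y - b x)`. Since
`gcd(a, b) = 1`, this injective map has image `{(u, v) | v ≡ q u [ZMOD c²]}` with `q` a unit
modulo `c²`. Every column `u ∈ [0, t c²]` of the box meets this lattice in `t` points, plus one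
more when `c² ∣ u`, for a total of `(t c² + 1) t + (t + 1) = c² t² + 2 t + 1`.
-/

section Cube

open Set Pointwise

def cubeMap (a b c : ℝ) : (Fin 3 → ℝ) →ₗ[ℝ] Fin 3 → ℝ :=
  Matrix.mulVecLin !![a, -b, 0; b, a, 0; 0, 0, c]

lemma cubeMap_apply (a b c : ℝ) (w : Fin 3 → ℝ) :
    cubeMap a b c w = ![a * w 0 - b * w 1, a * w 1 + b * w 0, c * w 2] := by
  ext i; fin_cases i <;> simp [cubeMap, Matrix.mulVec, dotProduct, Fin.sum_univ_three] <;> ring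

lemma pi_univ_pair_fin_three :
    univ.pi (fun _ : Fin 3 => ({0, 1} : Set ℝ)) = {![0, 0, 0], ![1, 0, 0], ![1, 1, 0], ![0, 1, 0],
      ![0, 0, 1], ![1, 0, 1], ![1, 1, 1], ![0, 1, 1]} := by
  ext w
  simp [funext_iff, Fin.forall_fin_succ]
  tauto

lemma image_cubeMap_vertices (a b c : ℝ) :
    cubeMap a b c '' univ.pi (fun _ => {0, 1}) = {![0, 0, 0], ![a, b, 0], ![a - b, a + b, 0],
      ![-b, a, 0], ![0, 0, c], ![a, b, c], ![a - b, a + b, c], ![-b, a, c]} := by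
  simp [pi_univ_pair_fin_three, image_insert_eq, cubeMap_apply]

lemma convexHull_eq_image_cubeMap (a b c : ℝ) :
    convexHull ℝ {![0, 0, 0], ![a, b, 0], ![a - b, a + b, 0],
      ![-b, a, 0], ![0, 0, c], ![a, b, c], ![a - b, a + b, c], ![-b, a, c]} =
      cubeMap a b c '' univ.pi (fun _ => Icc 0 1) := by
  rw [← image_cubeMap_vertices, ← LinearMap.image_convexHull, convexHull_pi]
  simp [convexHull_pair, segment_eq_Icc]

lemma smul_image_pi_Icc_zero_one {ι E : Type*} [AddCommGroup E] [Module ℝ E]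
    (f : (ι → ℝ) →ₗ[ℝ] E) {s : ℝ} (hs : 0 < s) :
    s • f '' univ.pi (fun _ => Icc 0 1) = f '' univ.pi (fun _ => Icc 0 s) := by
  rw [← image_smul_set, smul_set_pi₀' (Or.inr rfl)]
  simp only [Pi.smul_def, LinearOrderedField.smul_Icc hs, mul_zero, mul_one]

lemma cubeMap_eq_iff {a b c : ℝ} (hc : c ≠ 0) (habc : a ^ 2 + b ^ 2 = c ^ 2) (w p : Fin 3 → ℝ) :
    cubeMap a b c w = p ↔
      w = ![(a * p 0 + b * p 1) / c ^ 2, (a * p 1 - b * p 0) / c ^ 2, p 2 / c] := by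
  rw [cubeMap_apply]
  constructor <;> rintro rfl <;> ext i <;> fin_cases i <;> simp <;> field_simp
  · linear_combination -w 0 * habc
  · linear_combination -w 1 * habc
  · linear_combination p 0 * habc
  · linear_combination p 1 * habc

lemma mem_image_cubeMap_iff {a b c : ℝ} (hc : 0 < c) (habc : a ^ 2 + b ^ 2 = c ^ 2) (s : ℝ)
    (p : Fin 3 → ℝ) :
    p ∈ cubeMap a b c '' univ.pi (fun _ => Icc 0 s) ↔
      a * p 0 + b * p 1 ∈ Icc 0 (s * c ^ 2) ∧ a * p 1 - b * p 0 ∈ Icc 0 (s * c ^ 2) ∧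
        p 2 ∈ Icc 0 (s * c) := by
  simp only [mem_image, cubeMap_eq_iff hc.ne' habc, mem_pi, mem_univ, true_implies,
    Fin.forall_fin_succ]
  simp [mem_Icc, le_div_iff₀, div_le_iff₀, hc]

end Cube

section Counting

open Finset

lemma card_filter_Icc_modEq {N : ℤ} (hN : 0 < N) {t : ℤ} (ht : 0 ≤ t) (v : ℤ) :
    (#{x ∈ Icc 0 (t * N) | x ≡ v [ZMOD N]} : ℤ) = t + if N ∣ v then 1 else 0 := by
  have hIoc : (#{x ∈ Ioc 0 (t * N) | x ≡ v [ZMOD N]} : ℤ) = t := by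
    rw [Int.Ioc_filter_modEq_card _ _ hN]
    push_cast
    rw [show ((t : ℚ) * N - v) / N = t + (0 - v) / N by field_simp; ring, Int.floor_intCast_add]
    omega
  have h0 : 0 ≡ v [ZMOD N] ↔ N ∣ v := by rw [Int.modEq_comm, Int.modEq_zero_iff_dvd]
  rw [← Ioc_insert_left (by positivity), filter_insert]
  simp only [h0]
  split_ifs
  · rw [card_insert_of_notMem (by simp), Nat.cast_succ, hIoc]
  · rw [hIoc, add_zero]

lemma card_filter_Icc_product_modEq {N : ℤ} (hN : 0 < N) {t : ℤ} (ht : 0 ≤ t) {q : ℤ}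
    (hq : IsCoprime q N) :
    (#{w ∈ Icc 0 (t * N) ×ˢ Icc 0 (t * N) | w.2 ≡ q * w.1 [ZMOD N]} : ℤ) =
      N * t ^ 2 + 2 * t + 1 := by
  have hdvd : ∀ u, N ∣ q * u ↔ u ≡ 0 [ZMOD N] := fun u => by
    rw [Int.modEq_zero_iff_dvd]
    exact ⟨hq.symm.dvd_of_dvd_mul_left, fun h => h.mul_left q⟩
  rw [natCast_card_filter, sum_product]
  simp only [← natCast_card_filter]
  rw [sum_congr rfl fun u _ => card_filter_Icc_modEq hN ht (q * u), sum_add_distrib, sum_const,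
    sum_boole]
  simp only [hdvd]
  rw [card_filter_Icc_modEq hN ht 0, if_pos (dvd_zero N), Int.card_Icc, nsmul_eq_mul,
    Int.toNat_of_nonneg (by nlinarith)]
  ring

end Counting

section RotScale

open Set

/-- Multiplication by `a - b * I` on the Gaussian integers, in coordinates. -/
def rotScale (a b : ℤ) (q : ℤ × ℤ) : ℤ × ℤ := (a * q.1 + b * q.2, a * q.2 - b * q.1)

lemma rotScale_injective {a b : ℤ} (hab : a ^ 2 + b ^ 2 ≠ 0) :
    Function.Injective (rotScale a b) := by
  rintro ⟨x, y⟩ ⟨x', y'⟩ h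
  simp only [rotScale, Prod.mk.injEq] at h
  obtain ⟨h1, h2⟩ := h
  refine Prod.ext (mul_left_cancel₀ hab ?_) (mul_left_cancel₀ hab ?_)
  · linear_combination a * h1 - b * h2
  · linear_combination b * h1 + a * h2

lemma range_rotScale {a b x₀ y₀ : ℤ} (hbez : a * x₀ + b * y₀ = 1) :
    range (rotScale a b) = {w | w.2 ≡ (a * y₀ - b * x₀) * w.1 [ZMOD a ^ 2 + b ^ 2]} := by
  ext ⟨u, v⟩
  simp only [mem_range, mem_ofPred_eq, Int.modEq_iff_dvd]
  constructor
  · rintro ⟨⟨x, y⟩, h⟩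
    simp only [rotScale, Prod.mk.injEq] at h
    obtain ⟨rfl, rfl⟩ := h
    exact ⟨x * y₀ - y * x₀, by linear_combination (a * y - b * x) * hbez⟩
  · rintro ⟨k, hk⟩
    refine ⟨(u * x₀ + b * k, u * y₀ - a * k), ?_⟩
    simp only [rotScale, Prod.mk.injEq]
    constructor
    · linear_combination u * hbez
    · linear_combination hk

/-- The witness comes from `q ^ 2 + 1 = (a ^ 2 + b ^ 2) * (x₀ ^ 2 + y₀ ^ 2)` for
`q = a * y₀ - b * x₀`: `q` is a square root of `-1` modulo `a ^ 2 + b ^ 2`. -/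
lemma isCoprime_sq_add_sq {a b x₀ y₀ : ℤ} (hbez : a * x₀ + b * y₀ = 1) :
    IsCoprime (a * y₀ - b * x₀) (a ^ 2 + b ^ 2) :=
  ⟨b * x₀ - a * y₀, x₀ ^ 2 + y₀ ^ 2, by linear_combination (a * x₀ + b * y₀ + 1) * hbez⟩

lemma ncard_preimage_rotScale_box {a b : ℤ} (hab : IsCoprime a b) {t : ℤ} (ht : 0 ≤ t) :
    ((rotScale a b ⁻¹' Icc 0 (t * (a ^ 2 + b ^ 2)) ×ˢ Icc 0 (t * (a ^ 2 + b ^ 2))).ncard : ℤ) =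
      (a ^ 2 + b ^ 2) * t ^ 2 + 2 * t + 1 := by
  obtain ⟨x₀, y₀, hbez⟩ := hab
  replace hbez : a * x₀ + b * y₀ = 1 := by linear_combination hbez
  have hN : 0 < a ^ 2 + b ^ 2 := by
    nlinarith [isCoprime_sq_add_sq hbez, sq_nonneg (a * y₀ - b * x₀), sq_nonneg x₀, sq_nonneg y₀]
  rw [← ncard_image_of_injective _ (rotScale_injective hN.ne'), image_preimage_eq_inter_range,
    range_rotScale hbez, ← card_filter_Icc_product_modEq hN ht (isCoprime_sq_add_sq hbez),
    ← ncard_coe_finset]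
  congr 2
  ext ⟨u, v⟩
  simp only [mem_inter_iff, mem_prod, mem_Icc, mem_ofPred_eq, Finset.coe_filter,
    Finset.mem_product, Finset.mem_Icc]

end RotScale

open Pointwise
theorem pythagorean_cube_ehrhart_general (a b c : ℤ)
    (hc : 0 < c)
    (hpyth : a ^ 2 + b ^ 2 = c ^ 2) (hprim : Int.gcd a b = 1)
    (C : Set (Fin 3 → ℝ))
    (hC : C = convexHull ℝ {![0, 0, 0], ![(a : ℝ), b, 0], ![(a : ℝ) - b, (a : ℝ) + b, 0],
      ![-(b : ℝ), a, 0], ![0, 0, (c : ℝ)], ![(a : ℝ), b, c],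
      ![(a : ℝ) - b, (a : ℝ) + b, c], ![-(b : ℝ), a, c]}) :
    ∀ t : ℕ, 0 < t →
      (Set.ncard {p : Fin 3 → ℤ | (fun i => (p i : ℝ)) ∈ (t : ℝ) • C} : ℤ)
        = (c * t + 1) * (c ^ 2 * t ^ 2 + 2 * t + 1) := by
  intro t ht
  have hcR : (0 : ℝ) < c := by exact_mod_cast hc
  have hpythR : (a : ℝ) ^ 2 + (b : ℝ) ^ 2 = (c : ℝ) ^ 2 := by exact_mod_cast hpyth
  have hlattice : {p : Fin 3 → ℤ | (fun i => (p i : ℝ)) ∈ (t : ℝ) • C} =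
      (fun p : Fin 3 → ℤ => ((p 0, p 1), p 2)) ⁻¹'
        ((rotScale a b ⁻¹' Set.Icc 0 (t * c ^ 2) ×ˢ Set.Icc 0 (t * c ^ 2)) ×ˢ
          Set.Icc 0 (t * c)) := by
    ext p
    rw [Set.mem_ofPred_eq, hC, convexHull_eq_image_cubeMap,
      smul_image_pi_Icc_zero_one _ (by positivity), mem_image_cubeMap_iff hcR hpythR]
    simp only [Set.mem_preimage, Set.mem_prod, rotScale, Set.mem_Icc]
    norm_cast
    exact and_assoc.symm
  have hinj : Function.Injective (fun p : Fin 3 → ℤ => ((p 0, p 1), p 2)) := by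
    intro p p' h
    simp only [Prod.mk.injEq] at h
    ext i
    fin_cases i <;> simp [h]
  rw [hlattice, Set.ncard_preimage_of_injective_subset_range hinj
      fun w _ => ⟨![w.1.1, w.1.2, w.2], rfl⟩,
    Set.ncard_prod, Nat.cast_mul, ← hpyth,
    ncard_preimage_rotScale_box (Int.isCoprime_iff_gcd_eq_one.2 hprim) (by positivity), hpyth,
    ← Finset.coe_Icc, Set.ncard_coe_finset, Int.card_Icc, sub_zero,
    Int.toNat_of_nonneg (by positivity)]
  ring

theorem pythagorean_cube_ehrhart (a b c : ℤ)
    (ha : 0 < a) (hb : 0 < b) (hc : 0 < c)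
    (hpyth : a ^ 2 + b ^ 2 = c ^ 2) (hprim : Int.gcd a b = 1)
    (C : Set (Fin 3 → ℝ))
    (hC : C = convexHull ℝ {![0, 0, 0], ![(a : ℝ), b, 0], ![(a : ℝ) - b, (a : ℝ) + b, 0],
      ![-(b : ℝ), a, 0], ![0, 0, (c : ℝ)], ![(a : ℝ), b, c],
      ![(a : ℝ) - b, (a : ℝ) + b, c], ![-(b : ℝ), a, c]}) :
    ∀ t : ℕ, 0 < t →
      (Set.ncard {p : Fin 3 → ℤ | (fun i => (p i : ℝ)) ∈ (t : ℝ) • C} : ℤ)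
        = (c * t + 1) * (c ^ 2 * t ^ 2 + 2 * t + 1) :=
  pythagorean_cube_ehrhart_general a b c hc hpyth hprim C hC
end

section
/- The cube with vertex at the origin and edge vectors (−1,2,2), (2,−1,2), (2,2,−1) has Ehrhart polynomial L(t) = (3t+1)(9t²+1) = 27t³+9t²+3t+1. -/
open Pointwise

/-- Number of lattice points of ℤ³ in the dilate `t•C` of the lattice cube (parallelepiped)
with a vertex at the origin and edge vectors `v₁ v₂ v₃`. -/
noncomputable def cubeCount (v₁ v₂ v₃ : Fin 3 → ℤ) (t : ℕ) : ℕ :=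
  Set.ncard {p : Fin 3 → ℤ | ∃ x y z : ℝ, x ∈ Set.Icc (0 : ℝ) t ∧ y ∈ Set.Icc (0 : ℝ) t ∧
    z ∈ Set.Icc (0 : ℝ) t ∧ ∀ k, (p k : ℝ) = x * v₁ k + y * v₂ k + z * v₃ k}

/-- gcd of the three coordinates of an integer vector. -/
def gcd3 (v : Fin 3 → ℤ) : ℕ := Int.gcd (v 0) (Int.gcd (v 1) (v 2))

/-- Dot product of integer vectors in ℤ³. -/
def dot3 (u v : Fin 3 → ℤ) : ℤ := u 0 * v 0 + u 1 * v 1 + u 2 * v 2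

/-!
Let `V` be the matrix with rows `v₁, v₂, v₃`. Orthogonality of the edges means `V Vᵀ = 9`, so
`p = x v₁ + y v₂ + z v₃` exactly when `V p = 9 (x, y, z)`. Hence `p ↦ V p` maps the lattice points
of `t C` bijectively onto the points `m ∈ [0, 9t]³` with `Vᵀ m ≡ 0 (mod 9)`. This condition only
depends on `m mod 9`, and a residue class mod 9 meets `[0, 9t]` in `t + [r = 0]` integers, so the
count is a sum over the 27 residue vectors in the kernel of `Vᵀ` mod 9.
-/

open Finset Matrix

lemma card_filter_Ioc_intCast_eq (n : ℕ) [NeZero n] (a : ℤ) (r : ZMod n) :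
    #{x ∈ Ioc a (a + n) | ((x : ℤ) : ZMod n) = r} = 1 := by
  obtain ⟨v, rfl⟩ : ∃ v : ℤ, (v : ZMod n) = r := ⟨r.cast, ZMod.intCast_zmod_cast r⟩
  have key := Int.Ioc_filter_modEq_card a (a + n) (r := n) (by have := NeZero.pos n; omega) v
  simp_rw [← ZMod.intCast_eq_intCast_iff] at key
  have hn : (n : ℚ) ≠ 0 := NeZero.ne _
  -- `(a + n - v) / n = (a - v) / n + 1`, so the two floors differ by one
  rw [show ((a + n : ℤ) - v : ℚ) / ((n : ℤ) : ℚ) = (a - v) / ((n : ℤ) : ℚ) + 1 by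
    push_cast; field_simp; ring, Int.floor_add_one] at key
  omega

lemma card_filter_Icc_intCast_eq (n : ℕ) [NeZero n] (t : ℕ) (r : ZMod n) :
    #{x ∈ Icc 0 (n * t : ℤ) | ((x : ℤ) : ZMod n) = r} = t + if r = 0 then 1 else 0 := by
  induction t with
  | zero => by_cases hr : r = 0 <;> simp [filter_singleton, eq_comm, hr]
  | succ t ih =>
    have hsplit :
        Icc 0 (n * (t + 1 : ℕ) : ℤ) = Icc 0 (n * t : ℤ) ∪ Ioc (n * t : ℤ) (n * t + n) := by
      have : (0 : ℤ) ≤ n * t := by positivity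
      ext x
      simp only [mem_union, mem_Icc, mem_Ioc, Nat.cast_succ, mul_add_one]
      omega
    have hdisj : Disjoint (Icc 0 (n * t : ℤ)) (Ioc (n * t : ℤ) (n * t + n)) :=
      disjoint_left.2 fun x hx hx' => by simp only [mem_Icc, mem_Ioc] at hx hx'; omega
    rw [hsplit, filter_union, card_union_of_disjoint (disjoint_filter_filter hdisj), ih,
      card_filter_Ioc_intCast_eq]
    omega

lemma card_filter_piFinset_Icc_eq_sum {ι : Type*} [Fintype ι] [DecidableEq ι] (n : ℕ) [NeZero n]
    (t : ℕ) (P : (ι → ZMod n) → Prop) [DecidablePred P] :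
    #{m ∈ Fintype.piFinset fun _ : ι => Icc 0 (n * t : ℤ) | P fun i => ((m i : ℤ) : ZMod n)} =
      ∑ r with P r, ∏ i, (t + if r i = 0 then 1 else 0) := by
  rw [card_eq_sum_card_fiberwise (f := fun m i => ((m i : ℤ) : ZMod n)) (t := {r | P r})
    fun m hm => by simpa using (mem_filter.1 hm).2]
  refine sum_congr rfl fun r hr => ?_
  have hfiber : {m ∈ {m ∈ Fintype.piFinset fun _ : ι => Icc 0 (n * t : ℤ) |
      P fun i => ((m i : ℤ) : ZMod n)} | (fun i => ((m i : ℤ) : ZMod n)) = r} =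
      Fintype.piFinset fun i => {x ∈ Icc 0 (n * t : ℤ) | ((x : ℤ) : ZMod n) = r i} := by
    ext m
    simp only [mem_filter, Fintype.mem_piFinset, funext_iff]
    constructor
    · rintro ⟨⟨hm, -⟩, hr⟩ i
      exact ⟨hm i, hr i⟩
    · intro h
      refine ⟨⟨fun i => (h i).1, ?_⟩, fun i => (h i).2⟩
      convert (mem_filter.1 hr).2 using 1
      exact funext fun i => (h i).2
  rw [hfiber, Fintype.card_piFinset]
  simp only [card_filter_Icc_intCast_eq]

namespace Matrix

variable {ι : Type*} [Fintype ι] [DecidableEq ι] {V : Matrix ι ι ℤ} {n : ℕ}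

lemma map_intCast_mul_transpose_eq_iff {R : Type*} [Ring R] [CharZero R] :
    V.map (Int.cast : ℤ → R) * (V.map Int.cast)ᵀ = n • 1 ↔ V * Vᵀ = n • 1 := by
  have hmul : (V * Vᵀ).map (Int.cast : ℤ → R) = V.map Int.cast * (V.map Int.cast)ᵀ := by
    rw [← transpose_map]; exact Matrix.map_mul (f := Int.castRingHom R)
  have hone : (n • 1 : Matrix ι ι ℤ).map (Int.cast : ℤ → R) = n • 1 := by
    ext i j; simp [one_apply, natCast_apply]
  rw [← hmul, ← hone, (map_injective Int.cast_injective).eq_iff]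

lemma map_intCast_transpose_mul_eq_iff {R : Type*} [Ring R] [CharZero R] :
    (V.map (Int.cast : ℤ → R))ᵀ * V.map Int.cast = n • 1 ↔ Vᵀ * V = n • 1 := by
  simpa only [transpose_map, transpose_transpose] using
    map_intCast_mul_transpose_eq_iff (R := R) (V := Vᵀ)

theorem transpose_mul_self_eq_smul_one (hn : n ≠ 0) (hV : V * Vᵀ = n • 1) :
    Vᵀ * V = n • 1 := by
  set W := V.map (Int.cast : ℤ → ℚ)
  have hn' : (n : ℚ) ≠ 0 := Nat.cast_ne_zero.2 hn
  have hW : W * ((n : ℚ)⁻¹ • Wᵀ) = 1 := by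
    rw [Matrix.mul_smul, map_intCast_mul_transpose_eq_iff.2 hV, ← Nat.cast_smul_eq_nsmul ℚ,
      smul_smul, inv_mul_cancel₀ hn', one_smul]
  rw [← map_intCast_transpose_mul_eq_iff (R := ℚ), ← Nat.cast_smul_eq_nsmul ℚ,
    ← mul_eq_one_comm.1 hW, Matrix.smul_mul, smul_smul, mul_inv_cancel₀ hn', one_smul]

lemma mulVec_injective_of_transpose_mul_self (hn : n ≠ 0) (hVt : Vᵀ * V = n • 1) :
    Function.Injective V.mulVec := by
  intro p q h
  have := congrArg (Vᵀ *ᵥ ·) h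
  simp only [mulVec_mulVec, hVt, smul_mulVec, one_mulVec] at this
  exact smul_right_injective _ hn this

lemma exists_mulVec_eq_iff_dvd (hn : n ≠ 0) (hV : V * Vᵀ = n • 1) (m : ι → ℤ) :
    (∃ p, V *ᵥ p = m) ↔ ∀ k, (n : ℤ) ∣ (Vᵀ *ᵥ m) k := by
  constructor
  · rintro ⟨p, rfl⟩ k
    rw [mulVec_mulVec, transpose_mul_self_eq_smul_one hn hV, smul_mulVec, one_mulVec]
    exact ⟨p k, by simp⟩
  · intro h
    choose p hp using h
    refine ⟨p, smul_right_injective _ hn ?_⟩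
    have hVtm : Vᵀ *ᵥ m = n • p := funext fun k => by simp [hp]
    simp only [← mulVec_smul, ← hVtm, mulVec_mulVec, hV, smul_mulVec, one_mulVec]

lemma eq_vecMul_iff_mulVec_eq_smul {K : Type*} [Field K] [CharZero K] {W : Matrix ι ι K}
    (hn : n ≠ 0) (hW : W * Wᵀ = n • 1) (hWt : Wᵀ * W = n • 1) (u ξ : ι → K) :
    u = ξ ᵥ* W ↔ W *ᵥ u = n • ξ := by
  rw [← mulVec_transpose]
  constructor
  · rintro rfl
    rw [mulVec_mulVec, hW, smul_mulVec, one_mulVec]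
  · intro h
    have := congrArg (Wᵀ *ᵥ ·) h
    simp only [mulVec_mulVec, mulVec_smul, hWt, smul_mulVec, one_mulVec] at this
    exact smul_right_injective _ hn this

lemma exists_vecMul_eq_iff_mulVec_mem_Icc (hn : n ≠ 0) (hV : V * Vᵀ = n • 1) (p : ι → ℤ)
    (t : ℕ) :
    (∃ ξ : ι → ℝ, (∀ i, ξ i ∈ Set.Icc 0 (t : ℝ)) ∧ (fun k => (p k : ℝ)) = ξ ᵥ* V.map Int.cast) ↔
      ∀ i, (V *ᵥ p) i ∈ Icc 0 (n * t : ℤ) := by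
  set W := V.map (Int.cast : ℤ → ℝ)
  set u : ι → ℝ := fun k => (p k : ℝ)
  have hu (i : ι) : ((V *ᵥ p) i : ℝ) = (W *ᵥ u) i := RingHom.map_mulVec (Int.castRingHom ℝ) V p i
  simp_rw [eq_vecMul_iff_mulVec_eq_smul (W := W) hn (map_intCast_mul_transpose_eq_iff.2 hV)
    (map_intCast_transpose_mul_eq_iff.2 (transpose_mul_self_eq_smul_one hn hV)) u]
  constructor
  · rintro ⟨ξ, hξ, h⟩ i
    have hi : ((V *ᵥ p) i : ℝ) = n * ξ i := by rw [hu, h, Pi.smul_apply, nsmul_eq_mul]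
    have h0 : (0 : ℝ) ≤ (V *ᵥ p) i := by rw [hi]; exact mul_nonneg n.cast_nonneg (hξ i).1
    have h1 : ((V *ᵥ p) i : ℝ) ≤ n * t := by rw [hi]; gcongr; exact (hξ i).2
    exact mem_Icc.2 ⟨by exact_mod_cast h0, by exact_mod_cast h1⟩
  · intro h
    refine ⟨fun i => (W *ᵥ u) i / n, fun i => ?_, funext fun i => ?_⟩
    · obtain ⟨h0, h1⟩ := mem_Icc.1 (h i)
      dsimp only
      rw [← hu i, Set.mem_Icc, div_le_iff₀' (by positivity)]
      exact ⟨by positivity, by exact_mod_cast h1⟩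
    · rw [Pi.smul_apply, nsmul_eq_mul, mul_div_cancel₀ _ (Nat.cast_ne_zero.2 hn)]

end Matrix

def edgeMatrix (v₁ v₂ v₃ : Fin 3 → ℤ) : Matrix (Fin 3) (Fin 3) ℤ := Matrix.of ![v₁, v₂, v₃]

section Cube

variable {v₁ v₂ v₃ : Fin 3 → ℤ}

lemma exists_coords_iff_exists_vecMul_edgeMatrix (p : Fin 3 → ℤ) (t : ℕ) :
    (∃ x y z : ℝ, x ∈ Set.Icc (0 : ℝ) t ∧ y ∈ Set.Icc (0 : ℝ) t ∧ z ∈ Set.Icc (0 : ℝ) t ∧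
      ∀ k, (p k : ℝ) = x * v₁ k + y * v₂ k + z * v₃ k) ↔
    ∃ ξ : Fin 3 → ℝ, (∀ i, ξ i ∈ Set.Icc 0 (t : ℝ)) ∧
      (fun k => (p k : ℝ)) = ξ ᵥ* (edgeMatrix v₁ v₂ v₃).map Int.cast := by
  have hvecMul (ξ : Fin 3 → ℝ) (k : Fin 3) : (ξ ᵥ* (edgeMatrix v₁ v₂ v₃).map Int.cast) k =
      ξ 0 * v₁ k + ξ 1 * v₂ k + ξ 2 * v₃ k := by
    simp [vecMul, dotProduct, Fin.sum_univ_three, edgeMatrix]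
  constructor
  · rintro ⟨x, y, z, hx, hy, hz, h⟩
    refine ⟨![x, y, z], fun i => ?_, funext fun k => ?_⟩
    · fin_cases i <;> assumption
    · rw [hvecMul, h k]; rfl
  · rintro ⟨ξ, hξ, h⟩
    exact ⟨ξ 0, ξ 1, ξ 2, hξ 0, hξ 1, hξ 2, fun k => by rw [congrFun h k, hvecMul]⟩

variable {n : ℕ} [NeZero n]

theorem cubeCount_eq_card_filter (hV : edgeMatrix v₁ v₂ v₃ * (edgeMatrix v₁ v₂ v₃)ᵀ = n • 1)
    (t : ℕ) :
    cubeCount v₁ v₂ v₃ t = #{m ∈ Fintype.piFinset fun _ => Icc 0 (n * t : ℤ) |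
      (edgeMatrix v₁ v₂ v₃)ᵀ.map Int.cast *ᵥ (fun i => ((m i : ℤ) : ZMod n)) = 0} := by
  set E := edgeMatrix v₁ v₂ v₃
  have hn : n ≠ 0 := NeZero.ne n
  have hcube : {p : Fin 3 → ℤ | ∃ x y z : ℝ, x ∈ Set.Icc (0 : ℝ) t ∧ y ∈ Set.Icc (0 : ℝ) t ∧
      z ∈ Set.Icc (0 : ℝ) t ∧ ∀ k, (p k : ℝ) = x * v₁ k + y * v₂ k + z * v₃ k} =
      E.mulVec ⁻¹' ↑(Fintype.piFinset fun _ : Fin 3 => Icc 0 (n * t : ℤ)) := by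
    ext p
    rw [Set.mem_ofPred, exists_coords_iff_exists_vecMul_edgeMatrix,
      exists_vecMul_eq_iff_mulVec_mem_Icc hn hV, Set.mem_preimage, Finset.mem_coe,
      Fintype.mem_piFinset]
  rw [cubeCount, hcube, ← Set.ncard_image_of_injective _
    (mulVec_injective_of_transpose_mul_self hn (transpose_mul_self_eq_smul_one hn hV)),
    Set.image_preimage_eq_inter_range, ← Set.ncard_coe_finset, Finset.coe_filter]
  congr 1
  ext m
  rw [Set.mem_inter_iff, Set.mem_ofPred, Finset.mem_coe]
  refine and_congr_right fun _ => ?_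
  rw [Set.mem_range, exists_mulVec_eq_iff_dvd hn hV, funext_iff]
  refine forall_congr' fun k => ?_
  rw [Pi.zero_apply, ← ZMod.intCast_zmod_eq_zero_iff_dvd, ← eq_intCast (Int.castRingHom (ZMod n)),
    RingHom.map_mulVec]
  rfl

theorem cubeCount_eq_sum_prod (hV : edgeMatrix v₁ v₂ v₃ * (edgeMatrix v₁ v₂ v₃)ᵀ = n • 1)
    (t : ℕ) :
    cubeCount v₁ v₂ v₃ t = ∑ r : Fin 3 → ZMod n with (edgeMatrix v₁ v₂ v₃)ᵀ.map Int.cast *ᵥ r = 0,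
      ∏ i, (t + if r i = 0 then 1 else 0) := by
  rw [cubeCount_eq_card_filter hV,
    card_filter_piFinset_Icc_eq_sum n t fun r => (edgeMatrix v₁ v₂ v₃)ᵀ.map Int.cast *ᵥ r = 0]

end Cube

lemma sum_prod_kernel_mod_nine_eq (t : ℕ) :
    ∑ r : Fin 3 → ZMod 9 with
        (edgeMatrix ![-1, 2, 2] ![2, -1, 2] ![2, 2, -1])ᵀ.map Int.cast *ᵥ r = 0,
      ∏ i, (t + if r i = 0 then 1 else 0) = 27 * t ^ 3 + 9 * t ^ 2 + 3 * t + 1 := by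
  simp only [Fin.prod_univ_three]
  have hexpand (a b c : ℕ) : (t + a) * (t + b) * (t + c) =
      t ^ 3 + (a + b + c) * t ^ 2 + (a * b + a * c + b * c) * t + a * b * c := by ring
  simp only [hexpand, sum_add_distrib, ← sum_mul, sum_const, smul_eq_mul]
  -- The kernel has 27 elements; 3 of them vanish at a given coordinate, 1 at two given
  -- coordinates, 1 at all three. These closed counts are evaluated by `congr`'s `rfl`.
  congr 4

theorem cube3_ehrhart :
    ∀ t : ℕ, 0 < t →
      (cubeCount ![-1, 2, 2] ![2, -1, 2] ![2, 2, -1] t : ℤ) =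
        (3 * t + 1) * (9 * t ^ 2 + 1) := by
  intro t _
  rw [cubeCount_eq_sum_prod (n := 9) (by decide), sum_prod_kernel_mod_nine_eq]
  push_cast
  ring
end

section
/- The cube with vertex at the origin and edge vectors (−2,6,3), (3,−2,6), (6,3,−2) has Ehrhart polynomial L(t) = (7t+1)(49t²−4t+1). -/
/-!
Let `A` be the matrix with rows `v₁ v₂ v₃`. Orthogonality says `A Aᵀ = 49 I`, hence also
`Aᵀ A = 49 I`, so `p ↦ A p` maps the lattice points of `tC` bijectively onto the points of
`A ℤ³ = {q | 49 ∣ Aᵀ q}` in the box `[0, 49t]³`. This lattice contains `49 ℤ³`; its `343` classes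
modulo `49` are represented by `a (-2, 3, 6) + b (7, 7, 7)` with `0 ≤ a < 49`, `0 ≤ b < 7`
(the images of `e₁` and `(1, 1, 1)`). A class meets the box in `∏ᵢ (t + [qᵢ ≡ 0])` points, and
sorting the classes by which coordinates vanish modulo `49` (each coordinate for `7` classes, two
of them only for the zero class) gives `343t³ + 21t² + 3t + 1`.
-/

open Pointwise

open Finset Matrix

namespace Int

theorem card_Ioc_filter_modEq_add_mul (a c : ℤ) {N : ℕ} (hN : 0 < N) (t : ℕ) :
    #{x ∈ Ioc a (a + N * t) | x ≡ c [ZMOD N]} = t := by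
  zify
  rw [Int.Ioc_filter_modEq_card _ _ (by exact_mod_cast hN)]
  have hshift : ((a + N * t : ℤ) - c : ℚ) / (N : ℤ) = (a - c) / (N : ℤ) + t := by
    push_cast; field_simp; ring
  rw [hshift, Int.floor_add_natCast]
  simp

theorem card_Icc_filter_modEq {N : ℕ} (hN : 0 < N) (t : ℕ) (c : ℤ) :
    #{x ∈ Icc 0 ((N : ℤ) * t) | x ≡ c [ZMOD N]} = t + if (N : ℤ) ∣ c then 1 else 0 := by
  rw [← Finset.Ioc_insert_left (by positivity), Finset.filter_insert]
  have hIoc := card_Ioc_filter_modEq_add_mul 0 c hN t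
  rw [zero_add] at hIoc
  split_ifs with h0 hdvd hdvd
  · rw [card_insert_of_notMem (by simp), hIoc]
  · exact absurd (Int.modEq_zero_iff_dvd.mp h0.symm) hdvd
  · exact absurd (Int.modEq_zero_iff_dvd.mpr hdvd).symm h0
  · rw [hIoc, add_zero]

theorem cast_div_mem_Icc_iff {m : ℕ} (hm : (0 : ℝ) < m) {t : ℕ} {n : ℤ} :
    (n / m : ℝ) ∈ Set.Icc 0 (t : ℝ) ↔ n ∈ Set.Icc 0 ((m : ℤ) * t) := by
  rw [Set.mem_Icc, Set.mem_Icc, le_div_iff₀ hm, div_le_iff₀ hm, zero_mul, mul_comm]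
  norm_cast

end Int

theorem card_filter_piFinset_Icc_modEq {ι κ : Type*} [Fintype ι] [DecidableEq ι] [Fintype κ]
    {N : ℕ} (hN : 0 < N) (t : ℕ) (r : κ → ι → ℤ)
    (hr : ∀ s s', (∀ i, r s i ≡ r s' i [ZMOD N]) → s = s') :
    #{q ∈ Fintype.piFinset fun _ : ι => Icc 0 ((N : ℤ) * t) | ∃ s, ∀ i, q i ≡ r s i [ZMOD N]} =
      ∑ s, ∏ i, (t + if (N : ℤ) ∣ r s i then 1 else 0) := by
  set fiber : κ → Finset (ι → ℤ) := fun s =>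
    Fintype.piFinset fun i => {x ∈ Icc 0 ((N : ℤ) * t) | x ≡ r s i [ZMOD N]}
  have hunion : {q ∈ Fintype.piFinset fun _ : ι => Icc 0 ((N : ℤ) * t) |
      ∃ s, ∀ i, q i ≡ r s i [ZMOD N]} = univ.biUnion fiber := by
    ext q
    simp only [fiber, mem_filter, mem_biUnion, mem_univ, true_and, Fintype.mem_piFinset,
      forall_and]
    tauto
  have hdisj : ((univ : Finset κ) : Set κ).PairwiseDisjoint fiber := by
    intro s _ s' _ hne
    refine disjoint_left.mpr fun q hq hq' => hne (hr s s' fun i => ?_)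
    simp only [fiber, Fintype.mem_piFinset, mem_filter] at hq hq'
    exact (hq i).2.symm.trans (hq' i).2
  rw [hunion, card_biUnion hdisj]
  simp only [fiber, Fintype.card_piFinset, Int.card_Icc_filter_modEq hN]

namespace Matrix

variable {n : Type*} [Fintype n]

theorem map_intCast_smul_one [DecidableEq n] (m : ℕ) (R : Type*) [Ring R] :
    ((m : ℤ) • (1 : Matrix n n ℤ)).map (Int.castRingHom R) = (m : R) • 1 := by
  ext i j
  simp [Matrix.natCast_apply, Matrix.one_apply]

theorem intCast_comp_mulVec {R : Type*} [Ring R] (M : Matrix n n ℤ) (v : n → ℤ) :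
    (fun i => ((M *ᵥ v) i : R)) = M.map (Int.castRingHom R) *ᵥ fun j => (v j : R) :=
  funext fun i => RingHom.map_mulVec (Int.castRingHom R) M v i

variable [DecidableEq n] {A : Matrix n n ℤ} {m : ℕ}

theorem transpose_mul_self_eq_smul_one_s13 (hm : 0 < m) (hA : A * Aᵀ = (m : ℤ) • 1) :
    Aᵀ * A = (m : ℤ) • 1 := by
  set B := A.map (Int.castRingHom ℚ)
  have hm' : (m : ℚ) ≠ 0 := by exact_mod_cast hm.ne'
  have hcast := map_intCast_smul_one (n := n) m ℚ
  have hB : ((m : ℚ)⁻¹ • B) * Bᵀ = 1 := by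
    rw [Matrix.smul_mul, ← transpose_map, ← Matrix.map_mul, hA, hcast, smul_smul,
      inv_mul_cancel₀ hm', one_smul]
  rw [mul_eq_one_comm, Matrix.mul_smul, inv_smul_eq_iff₀ hm'] at hB
  apply map_injective (f := Int.castRingHom ℚ) Int.cast_injective
  dsimp only
  rwa [Matrix.map_mul, transpose_map, hcast]

theorem transpose_mulVec_mulVec (hm : 0 < m) (hA : A * Aᵀ = (m : ℤ) • 1) (p : n → ℤ) :
    Aᵀ *ᵥ (A *ᵥ p) = (m : ℤ) • p := by
  rw [mulVec_mulVec, transpose_mul_self_eq_smul_one_s13 hm hA, smul_mulVec, one_mulVec]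

theorem mulVec_injective_of_mul_transpose (hm : 0 < m) (hA : A * Aᵀ = (m : ℤ) • 1) :
    Function.Injective A.mulVec := by
  intro p p' hpp'
  apply smul_right_injective (n → ℤ) (show (m : ℤ) ≠ 0 by exact_mod_cast hm.ne')
  simp only [← transpose_mulVec_mulVec hm hA, hpp']

theorem mem_range_mulVec_iff (hm : 0 < m) (hA : A * Aᵀ = (m : ℤ) • 1) (q : n → ℤ) :
    q ∈ Set.range A.mulVec ↔ ∀ k, (m : ℤ) ∣ (Aᵀ *ᵥ q) k := by
  constructor
  · rintro ⟨p, rfl⟩ k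
    exact ⟨p k, by rw [transpose_mulVec_mulVec hm hA]; rfl⟩
  · intro hdvd
    choose p hp using hdvd
    refine ⟨p, smul_right_injective (n → ℤ) (show (m : ℤ) ≠ 0 by exact_mod_cast hm.ne') ?_⟩
    have hmp : (m : ℤ) • p = Aᵀ *ᵥ q := funext fun k => (hp k).symm
    dsimp only
    rw [← mulVec_smul, hmp, mulVec_mulVec, hA, smul_mulVec, one_mulVec]

end Matrix

def cubeSet (v₁ v₂ v₃ : Fin 3 → ℤ) (t : ℕ) : Set (Fin 3 → ℤ) :=
  {p | ∃ x y z : ℝ, x ∈ Set.Icc (0 : ℝ) t ∧ y ∈ Set.Icc (0 : ℝ) t ∧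
    z ∈ Set.Icc (0 : ℝ) t ∧ ∀ k, (p k : ℝ) = x * v₁ k + y * v₂ k + z * v₃ k}

theorem edgeMatrix_transpose_mulVec (v₁ v₂ v₃ : Fin 3 → ℤ) (c : Fin 3 → ℝ) (k : Fin 3) :
    (((edgeMatrix v₁ v₂ v₃).map (Int.castRingHom ℝ))ᵀ *ᵥ c) k =
      c 0 * v₁ k + c 1 * v₂ k + c 2 * v₃ k := by
  simp only [mulVec, dotProduct, edgeMatrix, Int.coe_castRingHom, transpose_apply, map_apply,
    of_apply, Fin.sum_univ_three, Fin.isValue, cons_val_zero, cons_val_one, Matrix.cons_val]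
  ring

section OrthogonalEdges

variable {v₁ v₂ v₃ : Fin 3 → ℤ} {m : ℕ} (hm : 0 < m)
  (hA : edgeMatrix v₁ v₂ v₃ * (edgeMatrix v₁ v₂ v₃)ᵀ = (m : ℤ) • 1)
include hm hA

theorem mem_cubeSet_iff {t : ℕ} {p : Fin 3 → ℤ} :
    p ∈ cubeSet v₁ v₂ v₃ t ↔ ∀ i, (edgeMatrix v₁ v₂ v₃ *ᵥ p) i ∈ Set.Icc 0 ((m : ℤ) * t) := by
  set A := edgeMatrix v₁ v₂ v₃
  have hm' : (0 : ℝ) < m := by exact_mod_cast hm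
  simp only [← Int.cast_div_mem_Icc_iff hm']
  constructor
  · rintro ⟨x, y, z, hx, hy, hz, hp⟩
    have hpc : (fun k => (p k : ℝ)) = (A.map (Int.castRingHom ℝ))ᵀ *ᵥ ![x, y, z] :=
      funext fun k => by rw [hp k, edgeMatrix_transpose_mulVec]; rfl
    have hAp : (fun i => ((A *ᵥ p) i : ℝ)) = (m : ℝ) • ![x, y, z] := by
      rw [intCast_comp_mulVec, hpc, mulVec_mulVec, ← transpose_map, ← Matrix.map_mul, hA,
        map_intCast_smul_one, smul_mulVec, one_mulVec]
    intro i
    rw [show ((A *ᵥ p) i : ℝ) = m * ![x, y, z] i from congrFun hAp i,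
      mul_div_cancel_left₀ _ hm'.ne']
    fin_cases i <;> assumption
  · intro hbox
    refine ⟨_, _, _, hbox 0, hbox 1, hbox 2, fun k => ?_⟩
    have hc : (fun i => ((A *ᵥ p) i : ℝ) / m) = (m : ℝ)⁻¹ • fun i => ((A *ᵥ p) i : ℝ) := by
      funext i
      simp [div_eq_inv_mul]
    have hp := intCast_comp_mulVec (R := ℝ) Aᵀ (A *ᵥ p)
    rw [transpose_mulVec_mulVec hm hA, transpose_map] at hp
    have := edgeMatrix_transpose_mulVec v₁ v₂ v₃ (fun i => ((A *ᵥ p) i : ℝ) / m) k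
    rw [← this, hc, mulVec_smul, ← hp]
    simp [hm'.ne']

theorem cubeCount_eq_card (t : ℕ) :
    cubeCount v₁ v₂ v₃ t = #{q ∈ Fintype.piFinset fun _ => Icc 0 ((m : ℤ) * t) |
      ∀ k, (m : ℤ) ∣ ((edgeMatrix v₁ v₂ v₃)ᵀ *ᵥ q) k} := by
  rw [cubeCount, ← cubeSet, ← Set.ncard_image_of_injective _
    (mulVec_injective_of_mul_transpose hm hA), ← Set.ncard_coe_finset]
  congr 1
  ext q
  simp only [Set.mem_image, coe_filter, Fintype.mem_piFinset, Set.mem_ofPred_eq,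
    ← mem_range_mulVec_iff hm hA, mem_cubeSet_iff hm hA, Finset.mem_Icc, Set.mem_Icc]
  constructor
  · rintro ⟨p, hp, rfl⟩
    exact ⟨hp, p, rfl⟩
  · rintro ⟨hq, p, rfl⟩
    exact ⟨p, hq, rfl⟩

end OrthogonalEdges

theorem edgeMatrix_cube7_mul_transpose :
    edgeMatrix ![-2, 6, 3] ![3, -2, 6] ![6, 3, -2] *
      (edgeMatrix ![-2, 6, 3] ![3, -2, 6] ![6, 3, -2])ᵀ = ((49 : ℕ) : ℤ) • 1 := by
  decide

/-- Representatives of the `343` classes of the lattice `A ℤ³` modulo `49`. -/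
def cube7Residue (s : Fin 49 × Fin 7) : Fin 3 → ℤ :=
  ![-2 * (s.1 : ℕ) + 7 * (s.2 : ℕ), 3 * (s.1 : ℕ) + 7 * (s.2 : ℕ), 6 * (s.1 : ℕ) + 7 * (s.2 : ℕ)]

theorem cube7Residue_modEq_injective {s s' : Fin 49 × Fin 7}
    (h : ∀ i, cube7Residue s i ≡ cube7Residue s' i [ZMOD 49]) : s = s' := by
  have h0 := h 0
  have h1 := h 1
  simp only [cube7Residue, Int.ModEq, Matrix.cons_val_zero, Matrix.cons_val_one] at h0 h1
  ext <;> omega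

theorem cube7_dvd_transpose_mulVec_iff (q : Fin 3 → ℤ) :
    (∀ k, (49 : ℤ) ∣ ((edgeMatrix ![-2, 6, 3] ![3, -2, 6] ![6, 3, -2])ᵀ *ᵥ q) k) ↔
      ∃ s, ∀ i, q i ≡ cube7Residue s i [ZMOD 49] := by
  simp only [mulVec, dotProduct, edgeMatrix, Int.reduceNeg, transpose_apply, of_apply, cons_val',
    cons_val_fin_one, Fin.sum_univ_three, Fin.isValue, cons_val_zero, cons_val_one,
    Matrix.cons_val, Fin.forall_fin_succ, neg_mul, cons_val_succ, forall_const, Int.ModEq,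
    cube7Residue, Fin.succ_zero_eq_one, Fin.succ_one_eq_two, IsEmpty.forall_iff, and_true,
    Prod.exists]
  constructor
  · rintro ⟨h0, h1, h2⟩
    -- `10` is the inverse of `5` modulo `49`
    obtain ⟨a, ha, ha₀, ha₁⟩ : ∃ a : ℕ, 49 ∣ q 1 - q 0 - 5 * a ∧ 7 ∣ q 1 - 3 * a ∧ a < 49 :=
      ⟨(10 * (q 1 - q 0) % 49).toNat, by omega, by omega, by omega⟩
    obtain ⟨b, hb, hb₁⟩ : ∃ b : ℕ, 49 ∣ q 1 - 3 * a - 7 * b ∧ b < 7 :=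
      ⟨((q 1 - 3 * a) % 49 / 7).toNat, by omega, by omega⟩
    exact ⟨⟨a, ha₁⟩, ⟨b, hb₁⟩, by dsimp only; omega⟩
  · rintro ⟨a, b, h0, h1, h2⟩
    omega

set_option maxRecDepth 10000 in
theorem sum_prod_cube7Residue (t : ℕ) :
    ∑ s, ∏ i, (t + if (49 : ℤ) ∣ cube7Residue s i then 1 else 0) =
      343 * t ^ 3 + 21 * t ^ 2 + 3 * t + 1 := by
  set δ : Fin 49 × Fin 7 → Fin 3 → ℕ := fun s i => if (49 : ℤ) ∣ cube7Residue s i then 1 else 0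
  have hδ₁ : ∑ s, (δ s 0 + δ s 1 + δ s 2) = 21 := by decide
  have hδ₂ : ∑ s, (δ s 0 * δ s 1 + δ s 0 * δ s 2 + δ s 1 * δ s 2) = 3 := by decide
  have hδ₃ : ∑ s, δ s 0 * δ s 1 * δ s 2 = 1 := by decide
  have hexpand : ∀ s, ∏ i, (t + δ s i) = t ^ 3 + (δ s 0 + δ s 1 + δ s 2) * t ^ 2 +
      (δ s 0 * δ s 1 + δ s 0 * δ s 2 + δ s 1 * δ s 2) * t + δ s 0 * δ s 1 * δ s 2 := by
    intro s
    rw [Fin.prod_univ_three]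
    ring
  show ∑ s, ∏ i, (t + δ s i) = _
  simp only [hexpand, sum_add_distrib, ← sum_mul, hδ₁, hδ₂, hδ₃, sum_const, card_univ,
    Fintype.card_prod, Fintype.card_fin, smul_eq_mul]

theorem cube7_ehrhart :
    ∀ t : ℕ, 0 < t →
      (cubeCount ![-2, 6, 3] ![3, -2, 6] ![6, 3, -2] t : ℤ) =
        (7 * t + 1) * (49 * t ^ 2 - 4 * t + 1) := by
  intro t _
  have hcount := card_filter_piFinset_Icc_modEq (N := 49) (by norm_num) t cube7Residue
    fun _ _ => cube7Residue_modEq_injective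
  simp only [Nat.cast_ofNat, sum_prod_cube7Residue] at hcount
  rw [cubeCount_eq_card (by norm_num) edgeMatrix_cube7_mul_transpose, Nat.cast_ofNat,
    filter_congr fun q _ => cube7_dvd_transpose_mulVec_iff q, hcount]
  push_cast
  ring
end

section
/- The regular tetrahedron T₃ with vertices (0,0,0), (1,1,4), (1,4,1), (4,1,1) has Ehrhart polynomial L(T₃,t) = 9t³ + (9/2)t² + (13/2)t + 1. -/
open Pointwise Finset

/-!
The facets of `T₃` are `∑ xⱼ ≤ 6` and `∑ xⱼ ≤ 6 xᵢ`, so the lattice points of `t • T₃` with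
coordinate sum `s` are those of the triangle `{x | ∀ i, ⌈s / 6⌉ ≤ xᵢ, ∑ xᵢ = s}`, of which there are
`(n + 1)(n + 2) / 2` with `n = s - 3 ⌈s / 6⌉`. Passing from `t` to `t + 1` adds the six slices
`s = 6t + 1, …, 6t + 6`, that is `27t² + 36t + 20` points, and summing these gives the polynomial.
-/

/-- Number of lattice points of ℤ³ in the dilate `t • P` of the polytope
`P = convexHull ℝ V`. -/
noncomputable def hullCount (V : Set (Fin 3 → ℝ)) (t : ℕ) : ℕ :=
  Set.ncard {p : Fin 3 → ℤ | (fun i => (p i : ℝ)) ∈ (t : ℝ) • convexHull ℝ V}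

local notation "T₃" =>
  convexHull ℝ ({![0, 0, 0], ![1, 1, 4], ![1, 4, 1], ![4, 1, 1]} : Set (Fin 3 → ℝ))

lemma Fin.forall_fin_three {P : Fin 3 → Prop} : (∀ i, P i) ↔ P 0 ∧ P 1 ∧ P 2 := by
  simp only [Fin.forall_fin_succ, IsEmpty.forall_iff, and_true, Fin.succ_zero_eq_one,
    Fin.succ_one_eq_two]

lemma convex_setOf_sum_le_and_sum_le_six_mul :
    Convex ℝ {y : Fin 3 → ℝ | ∑ i, y i ≤ 6 ∧ ∀ i, ∑ j, y j ≤ 6 * y i} := by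
  intro x hx y hy a b ha hb hab
  simp only [Set.mem_ofPred_eq, Pi.add_apply, Pi.smul_apply, smul_eq_mul, sum_add_distrib,
    ← mul_sum] at hx hy ⊢
  refine ⟨?_, fun i => ?_⟩
  · nlinarith [mul_le_mul_of_nonneg_left hx.1 ha, mul_le_mul_of_nonneg_left hy.1 hb]
  · nlinarith [mul_le_mul_of_nonneg_left (hx.2 i) ha, mul_le_mul_of_nonneg_left (hy.2 i) hb]

lemma mem_T3_iff (y : Fin 3 → ℝ) : y ∈ T₃ ↔ ∑ i, y i ≤ 6 ∧ ∀ i, ∑ j, y j ≤ 6 * y i := by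
  constructor
  · refine fun hy => convexHull_min ?_ convex_setOf_sum_le_and_sum_le_six_mul hy
    rintro v (rfl | rfl | rfl | rfl) <;>
      norm_num [Fin.sum_univ_three, Fin.forall_fin_three, Matrix.cons_val_two]
  · rintro ⟨hsum, hi⟩
    obtain ⟨h0, h1, h2⟩ := Fin.forall_fin_three.1 hi
    simp only [Fin.sum_univ_three] at hsum h0 h1 h2
    set s := y 0 + y 1 + y 2
    -- barycentric coordinates: `6 * y i - s` is `18` times the weight of the vertex with `4` at `i`
    refine mem_convexHull_of_exists_fintype
      ![1 - s / 6, (6 * y 2 - s) / 18, (6 * y 1 - s) / 18, (6 * y 0 - s) / 18]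
      ![![0, 0, 0], ![1, 1, 4], ![1, 4, 1], ![4, 1, 1]] ?_ ?_ ?_ ?_
    · intro i
      fin_cases i <;>
        simp only [Fin.isValue, Fin.zero_eta, Fin.mk_one, Fin.reduceFinMk, Matrix.cons_val_zero,
          Matrix.cons_val_one, Matrix.cons_val] <;> linarith
    · simp only [Fin.sum_univ_four, Matrix.cons_val_zero, Matrix.cons_val_one, Matrix.cons_val]
      ring
    · intro i
      fin_cases i <;> simp
    · ext i
      fin_cases i <;>
        simp only [Fin.isValue, Fin.zero_eta, Fin.mk_one, Fin.reduceFinMk, Finset.sum_apply,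
          Pi.smul_apply, smul_eq_mul, Fin.sum_univ_four, Matrix.cons_val_zero, Matrix.cons_val_one,
          Matrix.cons_val, s] <;> ring

lemma mem_smul_T3_iff {c : ℝ} (hc : 0 < c) (x : Fin 3 → ℝ) :
    x ∈ c • T₃ ↔ ∑ i, x i ≤ 6 * c ∧ ∀ i, ∑ j, x j ≤ 6 * x i := by
  rw [Set.mem_smul_set_iff_inv_smul_mem₀ hc.ne', mem_T3_iff]
  simp only [Pi.smul_apply, smul_eq_mul, ← mul_sum]
  refine and_congr ?_ (forall_congr' fun i => ?_)
  · rw [inv_mul_le_iff₀ hc, mul_comm]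
  · rw [mul_left_comm, mul_le_mul_iff_right₀ (inv_pos.2 hc)]

lemma two_mul_card_filter_add_le (n : ℕ) :
    2 * #{p ∈ range (n + 1) ×ˢ range (n + 1) | p.1 + p.2 ≤ n} = (n + 1) * (n + 2) := by
  induction n with
  | zero => rfl
  | succ n ih =>
    have hsplit : {p ∈ range (n + 2) ×ˢ range (n + 2) | p.1 + p.2 ≤ n + 1} =
        {p ∈ range (n + 1) ×ˢ range (n + 1) | p.1 + p.2 ≤ n} ∪ antidiagonal (n + 1) := by
      ext ⟨a, b⟩
      simp only [mem_filter, mem_product, mem_range, mem_union, HasAntidiagonal.mem_antidiagonal]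
      omega
    have hdisj : Disjoint {p ∈ range (n + 1) ×ˢ range (n + 1) | p.1 + p.2 ≤ n}
        (antidiagonal (n + 1)) := by
      simp only [disjoint_left, mem_filter, HasAntidiagonal.mem_antidiagonal]
      omega
    rw [hsplit, card_union_of_disjoint hdisj, Nat.card_antidiagonal]
    linarith

noncomputable def latticeTriangle (m s : ℤ) : Finset (Fin 3 → ℤ) :=
  {p ∈ Fintype.piFinset fun _ => Icc m (s - 2 * m) | ∑ i, p i = s}

lemma mem_latticeTriangle {m s : ℤ} {p : Fin 3 → ℤ} :
    p ∈ latticeTriangle m s ↔ (∀ i, m ≤ p i) ∧ ∑ i, p i = s := by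
  simp only [latticeTriangle, mem_filter, Fintype.mem_piFinset, mem_Icc, Fin.forall_fin_three,
    Fin.sum_univ_three, Fin.isValue]
  omega

lemma card_latticeTriangle_eq_card_filter_add_le (m : ℤ) (n : ℕ) :
    #(latticeTriangle m (3 * m + n)) = #{q ∈ range (n + 1) ×ˢ range (n + 1) | q.1 + q.2 ≤ n} := by
  refine card_nbij' (fun p => ((p 0 - m).toNat, (p 1 - m).toNat))
    (fun q => ![m + q.1, m + q.2, m + n - q.1 - q.2]) ?_ ?_ ?_ ?_
  · intro p hp
    simp only [mem_coe, mem_latticeTriangle, Fin.forall_fin_three, Fin.sum_univ_three] at hp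
    simp only [coe_filter, mem_product, mem_range, Set.mem_ofPred_eq]
    omega
  · intro q hq
    simp only [coe_filter, mem_product, mem_range, Set.mem_ofPred_eq] at hq
    simp only [mem_coe, mem_latticeTriangle, Fin.forall_fin_three, Fin.sum_univ_three,
      Matrix.cons_val_zero, Matrix.cons_val_one, Matrix.cons_val]
    omega
  · intro p hp
    simp only [mem_coe, mem_latticeTriangle, Fin.forall_fin_three, Fin.sum_univ_three] at hp
    ext i
    fin_cases i <;>
      simp only [Fin.isValue, Fin.zero_eta, Fin.mk_one, Fin.reduceFinMk, Int.ofNat_toNat,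
        Matrix.cons_val_zero, Matrix.cons_val_one, Matrix.cons_val] <;> omega
  · intro q _
    simp

lemma two_mul_card_latticeTriangle {m s : ℤ} (h : 3 * m - 2 ≤ s) :
    2 * (#(latticeTriangle m s) : ℤ) = (s - 3 * m + 1) * (s - 3 * m + 2) := by
  rcases le_or_gt (3 * m) s with hs | hs
  · obtain ⟨n, rfl⟩ := Int.exists_add_of_le hs
    rw [card_latticeTriangle_eq_card_filter_add_le, add_sub_cancel_left]
    exact_mod_cast two_mul_card_filter_add_le n
  · have hempty : latticeTriangle m s = ∅ := by
      refine eq_empty_of_forall_notMem fun p hp => ?_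
      rw [mem_latticeTriangle, Fin.forall_fin_three, Fin.sum_univ_three] at hp
      omega
    obtain rfl | rfl : s = 3 * m - 1 ∨ s = 3 * m - 2 := by omega
    all_goals simp [hempty]

noncomputable def latticePointsT3 (t : ℕ) : Finset (Fin 3 → ℤ) :=
  {p ∈ Fintype.piFinset fun _ => Icc 0 (6 * t) | ∑ i, p i ≤ 6 * t ∧ ∀ i, ∑ j, p j ≤ 6 * p i}

lemma mem_latticePointsT3 {t : ℕ} {p : Fin 3 → ℤ} :
    p ∈ latticePointsT3 t ↔ ∑ i, p i ≤ 6 * t ∧ ∀ i, ∑ j, p j ≤ 6 * p i := by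
  simp only [latticePointsT3, mem_filter, Fintype.mem_piFinset, mem_Icc, Fin.forall_fin_three,
    Fin.sum_univ_three]
  omega

lemma latticePointsT3_zero : latticePointsT3 0 = {0} := by
  ext p
  simp only [mem_latticePointsT3, Fin.forall_fin_three, Fin.sum_univ_three, mem_singleton,
    funext_iff, Fin.isValue, Pi.zero_apply]
  omega

lemma latticePointsT3_mono : Monotone latticePointsT3 := by
  intro t t' htt' p hp
  rw [mem_latticePointsT3] at hp ⊢
  exact ⟨hp.1.trans (by gcongr), hp.2⟩

lemma disjoint_latticeTriangle {m s s' : ℤ} (h : s ≠ s') :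
    Disjoint (latticeTriangle m s) (latticeTriangle m s') :=
  disjoint_left.2 fun _ hp hp' =>
    h ((mem_latticeTriangle.1 hp).2.symm.trans (mem_latticeTriangle.1 hp').2)

lemma latticePointsT3_succ_sdiff (t : ℕ) : latticePointsT3 (t + 1) \ latticePointsT3 t =
    (range 6).biUnion fun r => latticeTriangle (t + 1) (6 * t + r + 1) := by
  ext p
  simp only [mem_sdiff, mem_latticePointsT3, mem_biUnion, mem_range, mem_latticeTriangle,
    Fin.forall_fin_three, Fin.sum_univ_three]
  push_cast
  constructor
  · rintro ⟨hin, hout⟩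
    exact ⟨(p 0 + p 1 + p 2 - 6 * t - 1).toNat, by omega, by omega⟩
  · rintro ⟨r, hr, hp⟩
    omega

lemma two_mul_card_latticePointsT3 (t : ℕ) :
    2 * (#(latticePointsT3 t) : ℤ) = 18 * t ^ 3 + 9 * t ^ 2 + 13 * t + 2 := by
  induction t with
  | zero => simp [latticePointsT3_zero]
  | succ t ih =>
    have hshell : #(latticePointsT3 (t + 1)) =
        #(latticePointsT3 t) + ∑ r ∈ range 6, #(latticeTriangle (t + 1) (6 * t + r + 1)) := by
      rw [← card_sdiff_add_card_eq_card (latticePointsT3_mono t.le_succ),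
        latticePointsT3_succ_sdiff, card_biUnion, add_comm]
      intro r _ r' _ hrr'
      exact disjoint_latticeTriangle (by omega)
    have htriangle (r : ℕ) : 2 * (#(latticeTriangle (t + 1) (6 * t + r + 1)) : ℤ) =
        (3 * t + r - 1) * (3 * t + r) := by
      rw [two_mul_card_latticeTriangle (by omega)]
      ring
    rw [hshell]
    push_cast
    simp only [sum_range_succ, sum_range_zero]
    linear_combination ih + htriangle 0 + htriangle 1 + htriangle 2 + htriangle 3 + htriangle 4 +
      htriangle 5

lemma setOf_intCast_mem_smul_T3 {t : ℕ} (ht : 0 < t) :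
    {p : Fin 3 → ℤ | (fun i => (p i : ℝ)) ∈ (t : ℝ) • T₃} = latticePointsT3 t := by
  ext p
  rw [Set.mem_ofPred_eq, mem_smul_T3_iff (by exact_mod_cast ht), mem_coe, mem_latticePointsT3]
  simp only [← Int.cast_sum]
  norm_cast

theorem tetrahedron_T3_ehrhart :
    ∀ t : ℕ, 0 < t →
      (hullCount {![0, 0, 0], ![1, 1, 4], ![1, 4, 1], ![4, 1, 1]} t : ℚ) =
        9 * (t : ℚ) ^ 3 + 9 / 2 * t ^ 2 + 13 / 2 * t + 1 := by
  intro t ht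
  rw [hullCount, setOf_intCast_mem_smul_T3 ht, Set.ncard_coe_finset]
  have hcount : 2 * (#(latticePointsT3 t) : ℚ) = 18 * t ^ 3 + 9 * t ^ 2 + 13 * t + 2 := by
    exact_mod_cast two_mul_card_latticePointsT3 t
  linarith
end

section
/- The regular octahedron O₃ with vertices ±(−1,2,2), ±(2,−1,2), ±(2,2,−1) has Ehrhart polynomial L(O₃,t) = 36t³ + 9t² − t + 1. -/
open Pointwise

/-!
`O₃` is the image of the cross-polytope `{y | ∑ |yᵢ| ≤ 1}` under `A = 2J - 3I`, and `A² = 9`, so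
with `s = p₀ + p₁ + p₂` a lattice point `p` lies in `t • O₃` iff `∑ |2s - 3pᵢ| ≤ 9t`, i.e. iff
`-3t ≤ s ≤ 3t` and `|s - 6pᵢ| ≤ 9t`. The simplex `T = {s ≤ 3t, s - 6pᵢ ≤ 9t}` is the disjoint
union of `t • O₃` and four corner simplices, cut off by `s < -3t` and by `s - 6pᵢ < -9t`.
Each of these simplices is counted slice by slice along `s`: a slice is a triangle whose size
grows by `3` when `s` grows by `6`, so the slice counts add up to cubic polynomials in `t`,
`2 L(T) = 144t³ + 36t² + 26t + 2` and `18t³ + 4t`, `18t³ + 6t² + 8t` (three times) for the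
corners, leaving `2 L(O₃, t) = 72t³ + 18t² - 2t + 2`.
-/

open Finset

section CrossPolytope

variable {ι E : Type*} [Fintype ι] [AddCommGroup E] [Module ℝ E]

theorem convex_setOf_sum_abs_le (r : ℝ) : Convex ℝ {y : ι → ℝ | ∑ i, |y i| ≤ r} := by
  intro y hy z hz a b ha hb hab
  calc ∑ i, |(a • y + b • z) i| ≤ ∑ i, (a * |y i| + b * |z i|) := by
        gcongr with i
        simpa [abs_mul, abs_of_nonneg ha, abs_of_nonneg hb] using abs_add_le (a * y i) (b * z i)
    _ = a * ∑ i, |y i| + b * ∑ i, |z i| := by rw [sum_add_distrib, mul_sum, mul_sum]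
    _ ≤ a * r + b * r := by gcongr <;> assumption
    _ = r := by rw [← add_mul, hab, one_mul]

theorem convexHull_range_union_neg_subset [DecidableEq ι] (v : ι → E) :
    convexHull ℝ (Set.range v ∪ Set.range (-v)) ⊆
      Fintype.linearCombination ℝ v '' {y | ∑ i, |y i| ≤ 1} := by
  refine convexHull_min ?_ ((convex_setOf_sum_abs_le 1).linear_image _)
  rintro _ (⟨i, rfl⟩ | ⟨i, rfl⟩)
  · exact ⟨Pi.single i 1, by simp [Pi.single_apply, apply_ite], by simp⟩
  · exact ⟨Pi.single i (-1), by simp [Pi.single_apply, apply_ite], by simp⟩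

theorem linearCombination_mem_convexHull_range_union_neg [Nonempty ι] (v : ι → E)
    {y : ι → ℝ} (hy : ∑ i, |y i| ≤ 1) :
    Fintype.linearCombination ℝ v y ∈ convexHull ℝ (Set.range v ∪ Set.range (-v)) := by
  set H := convexHull ℝ (Set.range v ∪ Set.range (-v))
  have hv (i : ι) : v i ∈ H := subset_convexHull ℝ _ (Or.inl ⟨i, rfl⟩)
  have hnv (i : ι) : -v i ∈ H := subset_convexHull ℝ _ (Or.inr ⟨i, rfl⟩)
  have h0 : (0 : E) ∈ H := by
    obtain ⟨i⟩ := ‹Nonempty ι›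
    simpa using convex_convexHull ℝ _ (hv i) (hnv i) (by norm_num : (0 : ℝ) ≤ 1 / 2)
      (by norm_num : (0 : ℝ) ≤ 1 / 2) (by norm_num)
  -- `∑ yᵢ • vᵢ` is the convex combination of the points `±vᵢ` with weights `|yᵢ|` and of `0`
  let w : Option ι → ℝ := fun o => o.elim (1 - ∑ i, |y i|) fun i => |y i|
  let z : Option ι → E := fun o => o.elim 0 fun i => if 0 ≤ y i then v i else -v i
  have hyz : Fintype.linearCombination ℝ v y = ∑ o, w o • z o := by
    rw [Fintype.linearCombination_apply, Fintype.sum_option]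
    simp only [w, z, Option.elim, smul_zero, zero_add]
    refine sum_congr rfl fun i _ => ?_
    split_ifs with h
    · rw [abs_of_nonneg h]
    · rw [abs_of_neg (not_le.mp h), smul_neg, neg_smul, neg_neg]
  rw [hyz]
  refine (convex_convexHull ℝ _).sum_mem (fun o _ => ?_) ?_ (fun o _ => ?_)
  · cases o with
    | none => simpa [w] using hy
    | some i => exact abs_nonneg (y i)
  · simp [w, Fintype.sum_option]
  · cases o with
    | none => exact h0
    | some i => dsimp only [z, Option.elim]; split_ifs; exacts [hv i, hnv i]

theorem convexHull_range_union_neg [DecidableEq ι] [Nonempty ι] (v : ι → E) :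
    convexHull ℝ (Set.range v ∪ Set.range (-v)) =
      Fintype.linearCombination ℝ v '' {y | ∑ i, |y i| ≤ 1} := by
  refine (convexHull_range_union_neg_subset v).antisymm ?_
  rintro _ ⟨y, hy, rfl⟩
  exact linearCombination_mem_convexHull_range_union_neg v hy

end CrossPolytope

section Octahedron

variable {R : Type*} [CommRing R]

/-- `A = 2J - 3I`, three times the half-turn about the axis `(1, 1, 1)`; its columns are the
vertices `(-1, 2, 2)`, `(2, -1, 2)`, `(2, 2, -1)` of `O₃`. -/
def octahedronMap (q : Fin 3 → R) : Fin 3 → R := fun i => 2 * ∑ j, q j - 3 * q i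

theorem octahedronMap_octahedronMap (q : Fin 3 → R) :
    octahedronMap (octahedronMap q) = (9 : R) • q := by
  ext i; simp only [octahedronMap, Fin.sum_univ_three, Pi.smul_apply, smul_eq_mul]; ring

theorem octahedronMap_smul (c : R) (q : Fin 3 → R) :
    octahedronMap (c • q) = c • octahedronMap q := by
  ext i; simp only [octahedronMap, Fin.sum_univ_three, Pi.smul_apply, smul_eq_mul]; ring

theorem octahedronMap_intCast (p : Fin 3 → ℤ) :
    octahedronMap (fun i => (p i : R)) = fun i => ((octahedronMap p i : ℤ) : R) := by
  ext i; simp [octahedronMap]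

end Octahedron

def octahedronAxes : Fin 3 → Fin 3 → ℝ := ![![-1, 2, 2], ![2, -1, 2], ![2, 2, -1]]

theorem linearCombination_octahedronAxes (y : Fin 3 → ℝ) :
    Fintype.linearCombination ℝ octahedronAxes y = octahedronMap y := by
  ext i
  fin_cases i <;>
    simp [Fintype.linearCombination_apply, Fin.sum_univ_three, octahedronAxes, octahedronMap] <;>
    ring

theorem octahedron_vertices_eq :
    ({![-1, 2, 2], ![1, -2, -2], ![2, -1, 2], ![-2, 1, -2], ![2, 2, -1], ![-2, -2, 1]} :
      Set (Fin 3 → ℝ)) = Set.range octahedronAxes ∪ Set.range (-octahedronAxes) := by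
  ext x
  simp [octahedronAxes, or_comm, or_left_comm]

theorem mem_convexHull_octahedron_iff (x : Fin 3 → ℝ) :
    x ∈ convexHull ℝ (Set.range octahedronAxes ∪ Set.range (-octahedronAxes)) ↔
      ∑ i, |octahedronMap x i| ≤ 9 := by
  simp only [convexHull_range_union_neg, Set.mem_image, Set.mem_ofPred_eq,
    linearCombination_octahedronAxes]
  constructor
  · rintro ⟨y, hy, rfl⟩
    simp only [octahedronMap_octahedronMap, Pi.smul_apply, smul_eq_mul, abs_mul, ← mul_sum,
      abs_of_pos (by norm_num : (0 : ℝ) < 9)]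
    linarith
  · intro hx
    refine ⟨(9 : ℝ)⁻¹ • octahedronMap x, ?_, ?_⟩
    · simp only [Pi.smul_apply, smul_eq_mul, abs_mul, ← mul_sum,
        abs_of_pos (by norm_num : (0 : ℝ) < 9⁻¹)]
      linarith
    · rw [octahedronMap_smul, octahedronMap_octahedronMap, smul_smul]
      norm_num

theorem mem_smul_convexHull_octahedron_iff {c : ℝ} (hc : 0 < c) (x : Fin 3 → ℝ) :
    x ∈ c • convexHull ℝ (Set.range octahedronAxes ∪ Set.range (-octahedronAxes)) ↔
      ∑ i, |octahedronMap x i| ≤ 9 * c := by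
  rw [Set.mem_smul_set_iff_inv_smul_mem₀ hc.ne', mem_convexHull_octahedron_iff,
    octahedronMap_smul]
  simp only [Pi.smul_apply, smul_eq_mul, abs_mul, ← mul_sum, abs_inv, abs_of_pos hc]
  rw [inv_mul_le_iff₀ hc, mul_comm]

def InOctahedron (n : ℤ) (p : Fin 3 → ℤ) : Prop := ∑ i, |octahedronMap p i| ≤ 9 * n

instance (n : ℤ) : DecidablePred (InOctahedron n) :=
  fun _ => by unfold InOctahedron; infer_instance

theorem intCast_mem_smul_convexHull_octahedron_iff {t : ℕ} (ht : 0 < t) (p : Fin 3 → ℤ) :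
    (fun i => (p i : ℝ)) ∈
        (t : ℝ) • convexHull ℝ (Set.range octahedronAxes ∪ Set.range (-octahedronAxes)) ↔
      InOctahedron t p := by
  rw [mem_smul_convexHull_octahedron_iff (by exact_mod_cast ht), octahedronMap_intCast,
    InOctahedron]
  dsimp only
  norm_cast

theorem abs_add_abs_add_abs_le_iff {a b c m : ℤ} :
    |a| + |b| + |c| ≤ m ↔ a + b + c ≤ m ∧ a + b - c ≤ m ∧ a - b + c ≤ m ∧ a - b - c ≤ m ∧
      -a + b + c ≤ m ∧ -a + b - c ≤ m ∧ -a - b + c ≤ m ∧ -a - b - c ≤ m := by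
  constructor
  · intro h
    have := le_abs_self a; have := neg_abs_le a
    have := le_abs_self b; have := neg_abs_le b
    have := le_abs_self c; have := neg_abs_le c
    refine ⟨?_, ?_, ?_, ?_, ?_, ?_, ?_, ?_⟩ <;> linarith
  · rintro ⟨h₁, h₂, h₃, h₄, h₅, h₆, h₇, h₈⟩
    rcases abs_cases a with ⟨ha, -⟩ | ⟨ha, -⟩ <;> rcases abs_cases b with ⟨hb, -⟩ | ⟨hb, -⟩ <;>
      rcases abs_cases c with ⟨hc, -⟩ | ⟨hc, -⟩ <;> rw [ha, hb, hc] <;> linarith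

def InSimplex (a b₀ b₁ b₂ : ℤ) (p : Fin 3 → ℤ) : Prop :=
  p 0 + p 1 + p 2 ≤ a ∧ p 0 + p 1 + p 2 - b₀ ≤ 6 * p 0 ∧ p 0 + p 1 + p 2 - b₁ ≤ 6 * p 1 ∧
    p 0 + p 1 + p 2 - b₂ ≤ 6 * p 2

instance (a b₀ b₁ b₂ : ℤ) : DecidablePred (InSimplex a b₀ b₁ b₂) :=
  fun _ => by unfold InSimplex; infer_instance

theorem inOctahedron_iff (n : ℤ) (p : Fin 3 → ℤ) :
    InOctahedron n p ↔ InSimplex (3 * n) (9 * n) (9 * n) (9 * n) p ∧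
      -3 * n ≤ p 0 + p 1 + p 2 ∧ 6 * p 0 ≤ p 0 + p 1 + p 2 + 9 * n ∧
        6 * p 1 ≤ p 0 + p 1 + p 2 + 9 * n ∧ 6 * p 2 ≤ p 0 + p 1 + p 2 + 9 * n := by
  simp only [InOctahedron, InSimplex, Fin.sum_univ_three, octahedronMap,
    abs_add_abs_add_abs_le_iff]
  omega

noncomputable def cube (n : ℤ) : Finset (Fin 3 → ℤ) := Fintype.piFinset fun _ => Icc (-n) n

theorem mem_cube {n : ℤ} {p : Fin 3 → ℤ} :
    p ∈ cube n ↔ -n ≤ p 0 ∧ p 0 ≤ n ∧ -n ≤ p 1 ∧ p 1 ≤ n ∧ -n ≤ p 2 ∧ p 2 ≤ n := by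
  simp [cube, Fin.forall_fin_succ, and_assoc]

theorem mem_cube_of_inOctahedron {n : ℤ} {p : Fin 3 → ℤ} (hp : InOctahedron n p) :
    p ∈ cube (9 * n) := by
  rw [inOctahedron_iff] at hp
  unfold InSimplex at hp
  rw [mem_cube]
  omega


noncomputable def triangle (M : ℤ) : Finset (ℤ × ℤ) :=
  (Icc 0 M ×ˢ Icc 0 M).filter fun q => q.1 + q.2 ≤ M

theorem mem_triangle {M : ℤ} {q : ℤ × ℤ} :
    q ∈ triangle M ↔ 0 ≤ q.1 ∧ 0 ≤ q.2 ∧ q.1 + q.2 ≤ M := by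
  simp only [triangle, mem_filter, mem_product, mem_Icc]
  omega

theorem card_triangle_add_one {M : ℤ} (hM : -2 ≤ M) :
    #(triangle (M + 1)) = #(triangle M) + (M + 2).toNat := by
  rw [← card_filter_add_card_filter_not (fun q : ℤ × ℤ => q.1 + q.2 ≤ M)]
  congr 1
  · congr 1; ext q; simp only [mem_filter, mem_triangle]; omega
  · rw [show (M + 2).toNat = #(Icc 0 (M + 1)) by rw [Int.card_Icc]; omega]
    refine card_bij' (fun q _ => q.1) (fun a _ => (a, M + 1 - a)) ?_ ?_ ?_ ?_ <;>
      simp only [mem_filter, mem_triangle, mem_Icc, Prod.ext_iff, true_and, implies_true] <;> omega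

theorem two_mul_card_triangle {M : ℤ} (hM : -2 ≤ M) :
    2 * (#(triangle M) : ℤ) = (M + 1) * (M + 2) := by
  induction M, hM using Int.leInduction with
  | base => simp [triangle]
  | succ M hM ih =>
    rw [card_triangle_add_one hM, Nat.cast_add, Int.toNat_of_nonneg (by omega)]
    linear_combination ih

/-- On the slice `p 0 + p 1 + p 2 = s` of `InSimplex a b₀ b₁ b₂` the least value of `p i` is
`(s - bᵢ + 5) / 6 = ⌈(s - bᵢ) / 6⌉`, so the slice is a translate of
`triangle (sliceSize b₀ b₁ b₂ s)`. -/
def sliceSize (b₀ b₁ b₂ s : ℤ) : ℤ :=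
  s - (s - b₀ + 5) / 6 - (s - b₁ + 5) / 6 - (s - b₂ + 5) / 6

theorem card_filter_inSimplex_of_sum_eq (B : Finset (Fin 3 → ℤ)) {a b₀ b₁ b₂ s : ℤ}
    (hB : ∀ p, InSimplex a b₀ b₁ b₂ p → p ∈ B) (hs : s ≤ a) :
    #(B.filter fun p => InSimplex a b₀ b₁ b₂ p ∧ p 0 + p 1 + p 2 = s) =
      #(triangle (sliceSize b₀ b₁ b₂ s)) := by
  let L₀ := (s - b₀ + 5) / 6
  let L₁ := (s - b₁ + 5) / 6
  let lift (q : ℤ × ℤ) : Fin 3 → ℤ := ![L₀ + q.1, L₁ + q.2, s - L₀ - q.1 - L₁ - q.2]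
  have lift_apply (q : ℤ × ℤ) : lift q 0 = L₀ + q.1 ∧ lift q 1 = L₁ + q.2 ∧
      lift q 2 = s - L₀ - q.1 - L₁ - q.2 := ⟨rfl, rfl, rfl⟩
  refine card_bij' (fun p _ => (p 0 - L₀, p 1 - L₁)) (fun q _ => lift q) ?_ ?_ ?_ ?_
  · intro p hp
    obtain ⟨-, ⟨-, h₀, h₁, h₂⟩, hsum⟩ := mem_filter.mp hp
    simp only [mem_triangle, sliceSize, L₀, L₁]
    omega
  · intro q hq
    obtain ⟨h₀, h₁, h₂⟩ := lift_apply q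
    simp only [mem_triangle, sliceSize] at hq
    have hq' : InSimplex a b₀ b₁ b₂ (lift q) := by
      simp only [InSimplex, h₀, h₁, h₂, L₀, L₁]
      omega
    simp only [mem_filter, h₀, h₁, h₂]
    exact ⟨hB _ hq', hq', by ring⟩
  · intro p hp
    obtain ⟨-, -, hsum⟩ := mem_filter.mp hp
    obtain ⟨h₀, h₁, h₂⟩ := lift_apply (p 0 - L₀, p 1 - L₁)
    ext i
    fin_cases i <;> simp only [Fin.zero_eta, Fin.mk_one, Fin.reduceFinMk, h₀, h₁, h₂] <;> omega
  · intro q _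
    obtain ⟨h₀, h₁, -⟩ := lift_apply q
    rw [h₀, h₁, add_sub_cancel_left, add_sub_cancel_left]

theorem card_filter_inSimplex (B : Finset (Fin 3 → ℤ)) {a b₀ b₁ b₂ c : ℤ} {N : ℕ}
    (hN : c + N = a + 1) (hB : ∀ p, InSimplex a b₀ b₁ b₂ p → p ∈ B)
    (hc : ∀ p, InSimplex a b₀ b₁ b₂ p → c ≤ p 0 + p 1 + p 2) :
    #(B.filter (InSimplex a b₀ b₁ b₂)) =
      ∑ j ∈ range N, #(triangle (sliceSize b₀ b₁ b₂ (c + j))) := by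
  have hmaps : Set.MapsTo (fun p : Fin 3 → ℤ => (p 0 + p 1 + p 2 - c).toNat)
      (B.filter (InSimplex a b₀ b₁ b₂)) (range N) := by
    intro p hp
    have hp := (mem_filter.mp hp).2
    have := hc p hp
    simp only [InSimplex, coe_range, Set.mem_Iio] at hp ⊢
    omega
  rw [card_eq_sum_card_fiberwise hmaps]
  refine sum_congr rfl fun j hj => ?_
  rw [← card_filter_inSimplex_of_sum_eq B hB (by have := mem_range.mp hj; omega), filter_filter]
  refine congrArg card (filter_congr fun p _ => and_congr_right fun hp => ?_)
  have := hc p hp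
  omega

theorem sum_range_mul_of_add_period {f : ℕ → ℤ} {P : ℕ} {d : ℤ} (hf : ∀ j, f (j + P) = f j + d)
    (n : ℕ) :
    6 * ∑ j ∈ range (P * n), (f j + 1) * (f j + 2) =
      6 * n * ∑ k ∈ range P, (f k + 1) * (f k + 2) +
        3 * d * n * (n - 1) * (2 * ∑ k ∈ range P, f k + 3 * P) +
          P * d ^ 2 * n * (n - 1) * (2 * n - 1) := by
  have shift (m k : ℕ) : f (P * m + k) = f k + m * d := by
    induction m with
    | zero => simp
    | succ m ih => rw [mul_add_one, add_right_comm, hf, ih]; push_cast; ring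
  have block (m : ℕ) : ∑ k ∈ range P, (f (P * m + k) + 1) * (f (P * m + k) + 2) =
      ∑ k ∈ range P, (f k + 1) * (f k + 2) + m * d * (2 * ∑ k ∈ range P, f k + 3 * P) +
        P * m ^ 2 * d ^ 2 := by
    calc ∑ k ∈ range P, (f (P * m + k) + 1) * (f (P * m + k) + 2)
        = ∑ k ∈ range P, ((f k + 1) * (f k + 2) + m * d * (2 * f k + 3) + m ^ 2 * d ^ 2) :=
          sum_congr rfl fun k _ => by rw [shift]; ring
      _ = _ := by
          simp only [sum_add_distrib, ← mul_sum, sum_const, card_range, nsmul_eq_mul]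
          ring
  induction n with
  | zero => simp
  | succ n ih =>
    rw [mul_add_one, sum_range_add, mul_add, ih, block]
    push_cast
    ring

theorem two_mul_sum_card_triangle_lower (n : ℕ) :
    2 * ∑ j ∈ range (6 * n), (#(triangle ((j : ℤ) - 3 * ((j + 5) / 6))) : ℤ) =
      18 * n ^ 3 + 4 * n := by
  set f : ℕ → ℤ := fun j => j - 3 * ((j + 5) / 6) with hf
  have h := sum_range_mul_of_add_period (f := f) (P := 6) (d := 3)
    (fun j => by simp only [hf]; push_cast; omega) n
  rw [show ∑ k ∈ range 6, f k = 0 by decide,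
    show ∑ k ∈ range 6, (f k + 1) * (f k + 2) = 22 by decide, hf] at h
  rw [mul_sum, sum_congr rfl fun j _ => two_mul_card_triangle (by omega)]
  push_cast at h
  linarith

theorem two_mul_sum_card_triangle_side (n : ℕ) :
    2 * ∑ j ∈ range (6 * n), (#(triangle (1 + j - (j + 7) / 6 - 2 * ((j + 6) / 6))) : ℤ) =
      18 * n ^ 3 + 6 * n ^ 2 + 8 * n := by
  set f : ℕ → ℤ := fun j => 1 + j - (j + 7) / 6 - 2 * ((j + 6) / 6) with hf
  have h := sum_range_mul_of_add_period (f := f) (P := 6) (d := 3)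
    (fun j => by simp only [hf]; push_cast; omega) n
  rw [show ∑ k ∈ range 6, f k = 2 by decide,
    show ∑ k ∈ range 6, (f k + 1) * (f k + 2) = 32 by decide, hf] at h
  rw [mul_sum, sum_congr rfl fun j _ => two_mul_card_triangle (by omega)]
  push_cast at h
  linarith

theorem two_mul_card_bigSimplex (t : ℕ) :
    2 * (#((cube (9 * t)).filter (InSimplex (3 * t) (9 * t) (9 * t) (9 * t))) : ℤ) =
      144 * t ^ 3 + 36 * t ^ 2 + 26 * t + 2 := by
  rw [card_filter_inSimplex _ (c := -9 * t) (N := 12 * t + 1) (by push_cast; ring)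
    (fun p hp => by rw [mem_cube]; unfold InSimplex at hp; omega)
    (fun p hp => by unfold InSimplex at hp; omega)]
  have hslice (j : ℕ) :
      sliceSize (9 * t) (9 * t) (9 * t) (-9 * t + j) = j - 3 * ((j + 5) / 6) := by
    unfold sliceSize; omega
  simp only [hslice]
  rw [sum_range_succ, Nat.cast_add, Nat.cast_sum, mul_add, show 12 * t = 6 * (2 * t) by ring,
    two_mul_sum_card_triangle_lower, two_mul_card_triangle (by omega)]
  have hlast : ((6 * (2 * t) : ℕ) : ℤ) - 3 * ((((6 * (2 * t) : ℕ) : ℤ) + 5) / 6) = 6 * t := by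
    omega
  rw [hlast]
  push_cast
  ring

theorem two_mul_card_lowerCorner (t : ℕ) :
    2 * (#((cube (9 * t)).filter (InSimplex (-3 * t - 1) (9 * t) (9 * t) (9 * t))) : ℤ) =
      18 * t ^ 3 + 4 * t := by
  rw [card_filter_inSimplex _ (c := -9 * t) (N := 6 * t) (by push_cast; ring)
    (fun p hp => by rw [mem_cube]; unfold InSimplex at hp; omega)
    (fun p hp => by unfold InSimplex at hp; omega)]
  have hslice (j : ℕ) :
      sliceSize (9 * t) (9 * t) (9 * t) (-9 * t + j) = j - 3 * ((j + 5) / 6) := by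
    unfold sliceSize; omega
  simp only [hslice]
  rw [Nat.cast_sum, two_mul_sum_card_triangle_lower]

theorem two_mul_card_sideCorner (t : ℕ) {b₀ b₁ b₂ : ℤ}
    (hb : b₀ = -9 * t - 1 ∧ b₁ = 9 * t ∧ b₂ = 9 * t ∨ b₀ = 9 * t ∧ b₁ = -9 * t - 1 ∧ b₂ = 9 * t ∨
      b₀ = 9 * t ∧ b₁ = 9 * t ∧ b₂ = -9 * t - 1) :
    2 * (#((cube (9 * t)).filter (InSimplex (3 * t) b₀ b₁ b₂)) : ℤ) =
      18 * t ^ 3 + 6 * t ^ 2 + 8 * t := by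
  rw [card_filter_inSimplex _ (c := -3 * t + 1) (N := 6 * t) (by push_cast; ring)
    (fun p hp => by rw [mem_cube]; unfold InSimplex at hp; omega)
    (fun p hp => by unfold InSimplex at hp; omega)]
  have hslice (j : ℕ) :
      sliceSize b₀ b₁ b₂ (-3 * t + 1 + j) = 1 + j - (j + 7) / 6 - 2 * ((j + 6) / 6) := by
    unfold sliceSize; omega
  simp only [hslice]
  rw [Nat.cast_sum, two_mul_sum_card_triangle_side]

theorem ite_inSimplex_big_eq (t : ℕ) (p : Fin 3 → ℤ) :
    (if InSimplex (3 * t) (9 * t) (9 * t) (9 * t) p then 1 else 0 : ℤ) =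
      (if InOctahedron t p then 1 else 0) +
        (if InSimplex (-3 * t - 1) (9 * t) (9 * t) (9 * t) p then 1 else 0) +
        (if InSimplex (3 * t) (-9 * t - 1) (9 * t) (9 * t) p then 1 else 0) +
        (if InSimplex (3 * t) (9 * t) (-9 * t - 1) (9 * t) p then 1 else 0) +
        (if InSimplex (3 * t) (9 * t) (9 * t) (-9 * t - 1) p then 1 else 0) := by
  have hC : InSimplex (-3 * t - 1) (9 * t) (9 * t) (9 * t) p ↔
      InSimplex (3 * t) (9 * t) (9 * t) (9 * t) p ∧ p 0 + p 1 + p 2 ≤ -3 * t - 1 := by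
    simp only [InSimplex]; omega
  have hC₀ : InSimplex (3 * t) (-9 * t - 1) (9 * t) (9 * t) p ↔
      InSimplex (3 * t) (9 * t) (9 * t) (9 * t) p ∧ p 0 + p 1 + p 2 + 9 * t < 6 * p 0 := by
    simp only [InSimplex]; omega
  have hC₁ : InSimplex (3 * t) (9 * t) (-9 * t - 1) (9 * t) p ↔
      InSimplex (3 * t) (9 * t) (9 * t) (9 * t) p ∧ p 0 + p 1 + p 2 + 9 * t < 6 * p 1 := by
    simp only [InSimplex]; omega
  have hC₂ : InSimplex (3 * t) (9 * t) (9 * t) (-9 * t - 1) p ↔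
      InSimplex (3 * t) (9 * t) (9 * t) (9 * t) p ∧ p 0 + p 1 + p 2 + 9 * t < 6 * p 2 := by
    simp only [InSimplex]; omega
  by_cases hT : InSimplex (3 * t) (9 * t) (9 * t) (9 * t) p
  · simp only [inOctahedron_iff, hC, hC₀, hC₁, hC₂, hT, true_and, if_true]
    unfold InSimplex at hT
    split_ifs <;> omega
  · simp only [inOctahedron_iff, hC, hC₀, hC₁, hC₂, hT, false_and, if_false, add_zero]

theorem card_filter_inOctahedron (t : ℕ) :
    (#((cube (9 * t)).filter (InOctahedron t)) : ℤ) = 36 * t ^ 3 + 9 * t ^ 2 - t + 1 := by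
  have hpart : (#((cube (9 * t)).filter (InSimplex (3 * t) (9 * t) (9 * t) (9 * t))) : ℤ) =
      #((cube (9 * t)).filter (InOctahedron t)) +
        #((cube (9 * t)).filter (InSimplex (-3 * t - 1) (9 * t) (9 * t) (9 * t))) +
        #((cube (9 * t)).filter (InSimplex (3 * t) (-9 * t - 1) (9 * t) (9 * t))) +
        #((cube (9 * t)).filter (InSimplex (3 * t) (9 * t) (-9 * t - 1) (9 * t))) +
        #((cube (9 * t)).filter (InSimplex (3 * t) (9 * t) (9 * t) (-9 * t - 1))) := by
    simp only [natCast_card_filter, ← sum_add_distrib]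
    exact sum_congr rfl fun p _ => ite_inSimplex_big_eq t p
  have hT := two_mul_card_bigSimplex t
  have hC := two_mul_card_lowerCorner t
  have hC₀ := two_mul_card_sideCorner t (b₀ := -9 * t - 1) (b₁ := 9 * t) (b₂ := 9 * t) (by simp)
  have hC₁ := two_mul_card_sideCorner t (b₀ := 9 * t) (b₁ := -9 * t - 1) (b₂ := 9 * t) (by simp)
  have hC₂ := two_mul_card_sideCorner t (b₀ := 9 * t) (b₁ := 9 * t) (b₂ := -9 * t - 1) (by simp)
  linarith

theorem octahedron_O3_ehrhart :
    ∀ t : ℕ, 0 < t →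
      (hullCount {![-1, 2, 2], ![1, -2, -2], ![2, -1, 2], ![-2, 1, -2], ![2, 2, -1],
          ![-2, -2, 1]} t : ℚ) =
        36 * (t : ℚ) ^ 3 + 9 * t ^ 2 - t + 1 := by
  intro t ht
  have hpoints : {p : Fin 3 → ℤ | (fun i => (p i : ℝ)) ∈ (t : ℝ) • convexHull ℝ
      (Set.range octahedronAxes ∪ Set.range (-octahedronAxes))} =
      (cube (9 * t)).filter (InOctahedron t) := by
    ext p
    rw [Set.mem_ofPred_eq, intCast_mem_smul_convexHull_octahedron_iff ht, coe_filter,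
      Set.mem_ofPred_eq]
    exact ⟨fun hp => ⟨mem_cube_of_inOctahedron hp, hp⟩, And.right⟩
  rw [octahedron_vertices_eq, hullCount, hpoints, Set.ncard_coe_finset]
  exact_mod_cast card_filter_inOctahedron t
end
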